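/- arXiv:1301.6509 — 5 statements merged into one kernel-verified Lean document; each statement's English description precedes it below -/
import Mathlib

section
/- Let a and a′ be two compositions such that a′ is a rearrangement of a (i.e., the multisets of their components coincide). Then for every n, the number of compositions of size n that dominate a equals the number of compositions of size n that dominate a′. -/
/-- A restricted growth function (canonical sequential form of a set partition):
a word over the positive integers whose first letter is 1 and where each letter
is at most one more than the maximum of the preceding letters. -/
def IsRGF (w : List ℕ) : Prop :=
  (∀ x ∈ w, 1 ≤ x) ∧
  (w ≠ [] → w.getD 0 0 = 1) ∧
  ∀ i, i + 1 < w.length → w.getD (i + 1) 0 ≤ ((w.take (i + 1)).foldr max 0) + 1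

/-- Two words of the same length are order-isomorphic: corresponding entries
compare the same way (this preserves equalities as well). -/
def WordOrdIso (s t : List ℕ) : Prop :=
  s.length = t.length ∧
  ∀ i j, i < s.length → j < s.length →
    (s.getD i 0 < s.getD j 0 ↔ t.getD i 0 < t.getD j 0)

/-- `w` contains the pattern `p`: a subsequence of `w` is order-isomorphic to `p`. -/
def PatContains (w p : List ℕ) : Prop := ∃ s : List ℕ, s.Sublist w ∧ WordOrdIso s p

/-- `w` avoids the pattern `p`. -/
def PatAvoids (w p : List ℕ) : Prop := ¬ PatContains w p

/-- `pCount n T` = number of RGFs of length `n` avoiding every pattern in `T`. -/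
noncomputable def pCount (n : ℕ) (T : Set (List ℕ)) : ℕ :=
  {w : List ℕ | IsRGF w ∧ w.length = n ∧ ∀ p ∈ T, PatAvoids w p}.ncard

/-- `b` dominates `a`: `b` has a subsequence componentwise at least `a`. -/
def Dominates (b a : List ℕ) : Prop :=
  ∃ s : List ℕ, s.Sublist b ∧ List.Forall₂ (· ≤ ·) a s

/-!
A composition `b` dominates `x :: l` iff it splits greedily as `w ++ c :: r`, where every entry
of `w` is below `x`, `x ≤ c`, and `r` dominates `l`. Iterating, the compositions dominating `a`
are exactly the concatenations of one greedy block per entry of `a`, followed by an arbitrary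
tail. Transposing two adjacent entries of `a` is matched by exchanging the two corresponding
blocks of `b`; this rearranges `b`, so it preserves size and positivity, and it is undone by the
reverse exchange. Since permutations are generated by adjacent transpositions, the sets of
dominating compositions of any given size are in bijection.
-/

open List

theorem dominates_iff_sublistForall₂ {a b : List ℕ} :
    Dominates b a ↔ SublistForall₂ (· ≤ ·) a b := by
  rw [sublistForall₂_iff]
  exact ⟨fun ⟨s, hs, h⟩ => ⟨s, h, hs⟩, fun ⟨s, h, hs⟩ => ⟨s, hs, h⟩⟩

theorem dominates_cons_iff {x : ℕ} {l b : List ℕ} :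
    Dominates b (x :: l) ↔
      ∃ w c r, b = w ++ c :: r ∧ (∀ p ∈ w, p < x) ∧ x ≤ c ∧ Dominates r l := by
  simp only [dominates_iff_sublistForall₂]
  constructor
  · intro h
    induction b with
    | nil => cases h
    | cons p b ih =>
      by_cases hp : x ≤ p
      · refine ⟨[], p, b, rfl, by simp, hp, ?_⟩
        cases h with
        | cons _ h => exact h
        | cons_right h => exact _root_.trans (tail_sublistForall₂_self (x :: l)) h
      · cases h with
        | cons hxp _ => exact absurd hxp hp
        | cons_right h =>
          obtain ⟨w, c, r, rfl, hw, hc, hr⟩ := ih h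
          refine ⟨p :: w, c, r, rfl, ?_, hc, hr⟩
          simpa [not_le.mp hp] using hw
  · rintro ⟨w, c, r, rfl, -, hc, hr⟩
    induction w with
    | nil => exact .cons hc hr
    | cons p w ih => exact .cons_right ih

/-- The first component is the block of `b` consumed by the greedy embedding of `x :: l`. -/
def greedySplit (x : ℕ) (b : List ℕ) : List ℕ × List ℕ :=
  b.splitAt (b.findIdx (x ≤ ·) + 1)

theorem greedySplit_append_cons {x c : ℕ} {w r : List ℕ} (hw : ∀ p ∈ w, p < x) (hc : x ≤ c) :
    greedySplit x (w ++ c :: r) = (w ++ [c], r) := by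
  have hidx : (w ++ c :: r).findIdx (x ≤ ·) = w.length := by
    induction w with
    | nil => simp [findIdx_cons, hc]
    | cons p w ih =>
      simp only [mem_cons, forall_eq_or_imp] at hw
      simp [findIdx_cons, not_le.mpr hw.1, ih hw.2]
  rw [greedySplit, splitAt_eq, hidx, append_cons w c r]
  exact Prod.ext (take_left' (by simp)) (drop_left' (by simp))

def consMap (F : List ℕ → List ℕ) (x : ℕ) (b : List ℕ) : List ℕ :=
  (greedySplit x b).1 ++ F (greedySplit x b).2

def swapMap (x y : ℕ) (b : List ℕ) : List ℕ :=
  let r₁ := (greedySplit y b).2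
  (greedySplit x r₁).1 ++ (greedySplit y b).1 ++ (greedySplit x r₁).2

theorem consMap_append_cons (F : List ℕ → List ℕ) {x c : ℕ} {w r : List ℕ}
    (hw : ∀ p ∈ w, p < x) (hc : x ≤ c) :
    consMap F x (w ++ c :: r) = w ++ c :: F r := by
  simp [consMap, greedySplit_append_cons hw hc]

theorem swapMap_append_cons {x y c₁ c₂ : ℕ} {w₁ w₂ r : List ℕ}
    (hw₁ : ∀ p ∈ w₁, p < y) (hc₁ : y ≤ c₁) (hw₂ : ∀ p ∈ w₂, p < x) (hc₂ : x ≤ c₂) :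
    swapMap x y (w₁ ++ c₁ :: (w₂ ++ c₂ :: r)) = w₂ ++ c₂ :: (w₁ ++ c₁ :: r) := by
  simp [swapMap, greedySplit_append_cons hw₁ hc₁, greedySplit_append_cons hw₂ hc₂]

def DominatorTransfer (a a' : List ℕ) (F G : List ℕ → List ℕ) : Prop :=
  ∀ b, Dominates b a → (F b).Perm b ∧ Dominates (F b) a' ∧ G (F b) = b

theorem DominatorTransfer.id (a : List ℕ) : DominatorTransfer a a id id :=
  fun _ hb => ⟨.refl _, hb, rfl⟩

theorem DominatorTransfer.comp {a a' a'' : List ℕ} {F G F' G' : List ℕ → List ℕ}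
    (h : DominatorTransfer a a' F G) (h' : DominatorTransfer a' a'' F' G') :
    DominatorTransfer a a'' (F' ∘ F) (G ∘ G') := by
  intro b hb
  obtain ⟨hperm, hdom, hinv⟩ := h b hb
  obtain ⟨hperm', hdom', hinv'⟩ := h' (F b) hdom
  exact ⟨hperm'.trans hperm, hdom', by simp [hinv', hinv]⟩

theorem DominatorTransfer.consMap {l l' : List ℕ} {F G : List ℕ → List ℕ}
    (h : DominatorTransfer l l' F G) (x : ℕ) :
    DominatorTransfer (x :: l) (x :: l') (consMap F x) (consMap G x) := by
  intro b hb
  obtain ⟨w, c, r, rfl, hw, hc, hr⟩ := dominates_cons_iff.mp hb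
  obtain ⟨hperm, hdom, hinv⟩ := h r hr
  rw [consMap_append_cons F hw hc, consMap_append_cons G hw hc, hinv]
  exact ⟨(hperm.cons c).append_left w, dominates_cons_iff.mpr ⟨w, c, F r, rfl, hw, hc, hdom⟩, rfl⟩

theorem dominatorTransfer_swapMap (x y : ℕ) (l : List ℕ) :
    DominatorTransfer (y :: x :: l) (x :: y :: l) (swapMap x y) (swapMap y x) := by
  intro b hb
  obtain ⟨w₁, c₁, r₁, rfl, hw₁, hc₁, hr₁⟩ := dominates_cons_iff.mp hb
  obtain ⟨w₂, c₂, r, rfl, hw₂, hc₂, hr⟩ := dominates_cons_iff.mp hr₁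
  rw [swapMap_append_cons hw₁ hc₁ hw₂ hc₂, swapMap_append_cons hw₂ hc₂ hw₁ hc₁]
  refine ⟨?_, ?_, rfl⟩
  · simpa using (perm_append_comm (l₁ := w₂ ++ [c₂]) (l₂ := w₁ ++ [c₁])).append_right r
  · exact dominates_cons_iff.mpr ⟨w₂, c₂, _, rfl, hw₂, hc₂,
      dominates_cons_iff.mpr ⟨w₁, c₁, r, rfl, hw₁, hc₁, hr⟩⟩

theorem exists_dominatorTransfer_of_perm {a a' : List ℕ} (h : a.Perm a') :
    ∃ F G, DominatorTransfer a a' F G ∧ DominatorTransfer a' a G F := by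
  induction h with
  | nil => exact ⟨id, id, .id [], .id []⟩
  | cons x _ ih =>
    obtain ⟨F, G, hF, hG⟩ := ih
    exact ⟨consMap F x, consMap G x, hF.consMap x, hG.consMap x⟩
  | swap x y l =>
    exact ⟨swapMap x y, swapMap y x, dominatorTransfer_swapMap x y l,
      dominatorTransfer_swapMap y x l⟩
  | trans _ _ ih₁ ih₂ =>
    obtain ⟨F₁, G₁, hF₁, hG₁⟩ := ih₁
    obtain ⟨F₂, G₂, hF₂, hG₂⟩ := ih₂
    exact ⟨F₂ ∘ F₁, G₁ ∘ G₂, hF₁.comp hF₂, hG₂.comp hG₁⟩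

theorem ncard_setOf_dominates_eq_of_perm {a a' : List ℕ} (h : a.Perm a') (Q : List ℕ → Prop)
    (hQ : ∀ b b', b.Perm b' → Q b → Q b') :
    {b | Q b ∧ Dominates b a}.ncard = {b | Q b ∧ Dominates b a'}.ncard := by
  obtain ⟨F, G, hF, hG⟩ := exists_dominatorTransfer_of_perm h
  refine Set.BijOn.ncard_eq (f := F) (Set.InvOn.bijOn (f' := G) ⟨?_, ?_⟩ ?_ ?_)
  · exact fun b hb => (hF b hb.2).2.2
  · exact fun b hb => (hG b hb.2).2.2
  · exact fun b hb => ⟨hQ b _ (hF b hb.2).1.symm hb.1, (hF b hb.2).2.1⟩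
  · exact fun b hb => ⟨hQ b _ (hG b hb.2).1.symm hb.1, (hG b hb.2).2.1⟩

theorem stmt1_general (a a' : List ℕ) (hperm : a.Perm a') :
    ∀ n : ℕ,
      {b : List ℕ | (∀ x ∈ b, 1 ≤ x) ∧ b.sum = n ∧ Dominates b a}.ncard =
      {b : List ℕ | (∀ x ∈ b, 1 ≤ x) ∧ b.sum = n ∧ Dominates b a'}.ncard := by
  intro n
  have key := ncard_setOf_dominates_eq_of_perm hperm (fun b => (∀ x ∈ b, 1 ≤ x) ∧ b.sum = n)
    fun b b' hb ⟨hpos, hsum⟩ => ⟨fun x hx => hpos x (hb.mem_iff.mpr hx), hb.sum_eq ▸ hsum⟩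
  simpa only [and_assoc] using key

/-- Lemma 2.3: rearranging a composition does not change the number of
compositions of each size dominating it. -/
theorem stmt1 (a a' : List ℕ) (hpos : ∀ x ∈ a, 1 ≤ x) (hperm : a.Perm a') :
    ∀ n : ℕ,
      {b : List ℕ | (∀ x ∈ b, 1 ≤ x) ∧ b.sum = n ∧ Dominates b a}.ncard =
      {b : List ℕ | (∀ x ∈ b, 1 ≤ x) ∧ b.sum = n ∧ Dominates b a'}.ncard :=
  stmt1_general a a' hperm
end

section
/- Let a = (a₁,…,a_m) be a composition with a_m = 2, and let a′ = (a₁,…,a_{m−1},1,1). Then for every n, the number of compositions of size n that dominate a equals the number of compositions of size n that dominate a′. -/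
open List

section Dominates

variable {a b c u v : List ℕ}

theorem Dominates.of_sublist (h : Dominates u a) (huv : u <+ v) : Dominates v a :=
  let ⟨s, hs, hf⟩ := h
  ⟨s, hs.trans huv, hf⟩

theorem Dominates.append (h₁ : Dominates u a) (h₂ : Dominates v c) :
    Dominates (u ++ v) (a ++ c) :=
  let ⟨s, hs, hf⟩ := h₁
  let ⟨t, ht, hg⟩ := h₂
  ⟨s ++ t, hs.append ht, rel_append hf hg⟩

theorem dominates_append_iff :
    Dominates b (a ++ c) ↔ ∃ u v, b = u ++ v ∧ Dominates u a ∧ Dominates v c := by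
  constructor
  · rintro ⟨s, hs, hf⟩
    rw [← take_append_drop a.length s] at hs
    obtain ⟨u, v, rfl, hu, hv⟩ := append_sublist_iff.mp hs
    refine ⟨u, v, rfl, ⟨_, hu, ?_⟩, ⟨_, hv, ?_⟩⟩
    · simpa using forall₂_take a.length hf
    · simpa using forall₂_drop a.length hf
  · rintro ⟨u, v, rfl, hu, hv⟩
    exact hu.append hv

theorem Dominates.of_append (h : Dominates b (a ++ c)) : Dominates b a := by
  obtain ⟨u, v, rfl, hu, -⟩ := dominates_append_iff.mp h
  exact hu.of_sublist (sublist_append_left u v)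

theorem dominates_singleton_iff {k : ℕ} : Dominates b [k] ↔ ∃ x ∈ b, k ≤ x := by
  simp [Dominates, forall₂_cons_left_iff]

theorem dominates_replicate_one_iff {k : ℕ} (hb : ∀ x ∈ b, 1 ≤ x) :
    Dominates b (replicate k 1) ↔ k ≤ b.length := by
  constructor
  · rintro ⟨s, hs, hf⟩
    simpa [← hf.length_eq] using hs.length_le
  · intro hk
    refine ⟨b.take k, take_sublist k b, forall₂_iff_get.mpr ⟨by simpa using hk, fun i _ _ => ?_⟩⟩
    simpa using hb _ (getElem_mem _)

end Dominates

-- The length of the shortest prefix of `b` dominating `a`; junk value `0` if `b` does not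
-- dominate `a`.
noncomputable def domPrefixLen (a b : List ℕ) : ℕ := sInf {j | Dominates (b.take j) a}

section domPrefixLen

variable {a b c : List ℕ}

theorem dominates_take_domPrefixLen (h : Dominates b a) :
    Dominates (b.take (domPrefixLen a b)) a :=
  Nat.sInf_mem (s := {j | Dominates (b.take j) a}) ⟨b.length, by simpa using h⟩

theorem domPrefixLen_le_length (h : Dominates b a) : domPrefixLen a b ≤ b.length :=
  Nat.sInf_le (by simpa using h)

theorem domPrefixLen_le_of_dominates_take {j : ℕ} (h : Dominates (b.take j) a) :
    domPrefixLen a b ≤ j :=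
  Nat.sInf_le h

theorem not_dominates_take_of_lt_domPrefixLen {j : ℕ} (hj : j < domPrefixLen a b) :
    ¬ Dominates (b.take j) a :=
  Nat.notMem_of_lt_sInf hj

theorem dominates_append_iff_drop_domPrefixLen (h : Dominates b a) :
    Dominates b (a ++ c) ↔ Dominates (b.drop (domPrefixLen a b)) c := by
  constructor
  · intro hac
    obtain ⟨u, v, rfl, hu, hv⟩ := dominates_append_iff.mp hac
    have hle : domPrefixLen a (u ++ v) ≤ u.length :=
      domPrefixLen_le_of_dominates_take (by simpa using hu)
    refine hv.of_sublist ?_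
    simpa using drop_sublist_drop_left (u ++ v) hle
  · intro hc
    simpa using (dominates_take_domPrefixLen h).append hc

theorem domPrefixLen_take_append (h : Dominates b a) (s : List ℕ) :
    domPrefixLen a (b.take (domPrefixLen a b) ++ s) = domPrefixLen a b := by
  have hlen : (b.take (domPrefixLen a b)).length = domPrefixLen a b := by
    simpa using domPrefixLen_le_length h
  have htake : ∀ j ≤ domPrefixLen a b,
      (b.take (domPrefixLen a b) ++ s).take j = b.take j := by
    intro j hj
    rw [take_append_of_le_length (by omega), take_take, min_eq_left hj]
  refine le_antisymm (domPrefixLen_le_of_dominates_take ?_) (not_lt.mp fun hlt => ?_)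
  · rw [htake _ le_rfl]
    exact dominates_take_domPrefixLen h
  · have hdom : Dominates (b.take (domPrefixLen a b) ++ s) a :=
      (dominates_take_domPrefixLen h).of_sublist (sublist_append_left _ _)
    have hprefix := dominates_take_domPrefixLen hdom
    rw [htake _ hlt.le] at hprefix
    exact not_dominates_take_of_lt_domPrefixLen hlt hprefix

end domPrefixLen

def swapSingletonOnes (s : List ℕ) : List ℕ :=
  if 2 ≤ s.length ∧ s = replicate s.length 1 then [s.length]
  else if s.length = 1 ∧ 2 ≤ s.sum then replicate s.sum 1
  else s

section swapSingletonOnes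

variable {s : List ℕ}

theorem sum_swapSingletonOnes (s : List ℕ) : (swapSingletonOnes s).sum = s.sum := by
  unfold swapSingletonOnes
  split_ifs with h₁ h₂
  · conv_rhs => rw [h₁.2]
    simp
  · simp
  · rfl

theorem swapSingletonOnes_pos (hs : ∀ x ∈ s, 1 ≤ x) : ∀ x ∈ swapSingletonOnes s, 1 ≤ x := by
  unfold swapSingletonOnes
  split_ifs with h₁ h₂
  · simpa using h₁.1.trans' (by norm_num)
  · intro x hx
    rw [eq_of_mem_replicate hx]
  · exact hs

theorem swapSingletonOnes_replicate {m : ℕ} (hm : 2 ≤ m) :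
    swapSingletonOnes (replicate m 1) = [m] := by
  simp [swapSingletonOnes, hm]

theorem swapSingletonOnes_singleton {m : ℕ} (hm : 2 ≤ m) :
    swapSingletonOnes [m] = replicate m 1 := by
  simp [swapSingletonOnes, hm]

theorem swapSingletonOnes_involutive : Function.Involutive swapSingletonOnes := by
  intro s
  by_cases h₁ : 2 ≤ s.length ∧ s = replicate s.length 1
  · rw [show swapSingletonOnes s = [s.length] from if_pos h₁, swapSingletonOnes_singleton h₁.1,
      ← h₁.2]
  by_cases h₂ : s.length = 1 ∧ 2 ≤ s.sum
  · obtain ⟨x, rfl⟩ := length_eq_one_iff.mp h₂.1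
    rw [sum_singleton] at h₂
    rw [swapSingletonOnes_singleton h₂.2, swapSingletonOnes_replicate h₂.2]
  · have hfix : swapSingletonOnes s = s := by rw [swapSingletonOnes, if_neg h₁, if_neg h₂]
    rw [hfix, hfix]

theorem exists_two_le_swapSingletonOnes_iff (hs : ∀ x ∈ s, 1 ≤ x) :
    (∃ x ∈ swapSingletonOnes s, 2 ≤ x) ↔ 2 ≤ s.length := by
  unfold swapSingletonOnes
  split_ifs with h₁ h₂
  · simp [h₁.1]
  · simp [h₂.1]
  · constructor
    · rintro ⟨x, hx, h2x⟩
      by_contra hlen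
      have hlen1 : s.length = 1 := by have := length_pos_of_mem hx; omega
      obtain ⟨y, rfl⟩ := length_eq_one_iff.mp hlen1
      simp at hx h₂
      omega
    · intro hlen
      have hnotOnes : ¬ ∀ x ∈ s, x = 1 := fun h => h₁ ⟨hlen, eq_replicate_iff.mpr ⟨rfl, h⟩⟩
      push Not at hnotOnes
      obtain ⟨x, hx, hne⟩ := hnotOnes
      have hx1 := hs x hx
      exact ⟨x, hx, by omega⟩

theorem two_le_length_swapSingletonOnes_iff (hs : ∀ x ∈ s, 1 ≤ x) :
    2 ≤ (swapSingletonOnes s).length ↔ ∃ x ∈ s, 2 ≤ x := by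
  simpa [swapSingletonOnes_involutive s] using
    (exists_two_le_swapSingletonOnes_iff (swapSingletonOnes_pos hs)).symm

end swapSingletonOnes

noncomputable def swapTail (a b : List ℕ) : List ℕ :=
  b.take (domPrefixLen a b) ++ swapSingletonOnes (b.drop (domPrefixLen a b))

section swapTail

variable {a b c : List ℕ}

theorem sum_swapTail (a b : List ℕ) : (swapTail a b).sum = b.sum := by
  rw [swapTail, sum_append, sum_swapSingletonOnes, ← sum_append, take_append_drop]

theorem swapTail_pos (hb : ∀ x ∈ b, 1 ≤ x) : ∀ x ∈ swapTail a b, 1 ≤ x := by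
  intro x hx
  rcases mem_append.mp hx with hx | hx
  · exact hb x (mem_of_mem_take hx)
  · exact swapSingletonOnes_pos (fun y hy => hb y (mem_of_mem_drop hy)) x hx

theorem domPrefixLen_swapTail (h : Dominates b a) :
    domPrefixLen a (swapTail a b) = domPrefixLen a b :=
  domPrefixLen_take_append h _

theorem take_domPrefixLen_swapTail (h : Dominates b a) :
    (swapTail a b).take (domPrefixLen a (swapTail a b)) = b.take (domPrefixLen a b) := by
  rw [domPrefixLen_swapTail h, swapTail, take_left']
  simpa using domPrefixLen_le_length h

theorem drop_domPrefixLen_swapTail (h : Dominates b a) :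
    (swapTail a b).drop (domPrefixLen a (swapTail a b)) =
      swapSingletonOnes (b.drop (domPrefixLen a b)) := by
  rw [domPrefixLen_swapTail h, swapTail, drop_left']
  simpa using domPrefixLen_le_length h

theorem swapTail_swapTail (h : Dominates b a) : swapTail a (swapTail a b) = b := by
  rw [swapTail, take_domPrefixLen_swapTail h, drop_domPrefixLen_swapTail h,
    swapSingletonOnes_involutive, take_append_drop]

theorem dominates_swapTail (h : Dominates b a) : Dominates (swapTail a b) a :=
  (dominates_take_domPrefixLen h).of_sublist (sublist_append_left _ _)

theorem dominates_swapTail_append_iff (h : Dominates b a) :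
    Dominates (swapTail a b) (a ++ c) ↔
      Dominates (swapSingletonOnes (b.drop (domPrefixLen a b))) c := by
  rw [dominates_append_iff_drop_domPrefixLen (dominates_swapTail h), drop_domPrefixLen_swapTail h]

theorem dominates_swapTail_append_one_one_iff (hb : ∀ x ∈ b, 1 ≤ x) (h : Dominates b a) :
    Dominates (swapTail a b) (a ++ [1, 1]) ↔ Dominates b (a ++ [2]) := by
  have hd : ∀ x ∈ b.drop (domPrefixLen a b), 1 ≤ x := fun x hx => hb x (mem_of_mem_drop hx)
  rw [dominates_swapTail_append_iff h, dominates_append_iff_drop_domPrefixLen h,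
    dominates_singleton_iff, ← two_le_length_swapSingletonOnes_iff hd]
  exact dominates_replicate_one_iff (k := 2) (swapSingletonOnes_pos hd)

theorem dominates_swapTail_append_two_iff (hb : ∀ x ∈ b, 1 ≤ x) (h : Dominates b a) :
    Dominates (swapTail a b) (a ++ [2]) ↔ Dominates b (a ++ [1, 1]) := by
  have hd : ∀ x ∈ b.drop (domPrefixLen a b), 1 ≤ x := fun x hx => hb x (mem_of_mem_drop hx)
  rw [dominates_swapTail_append_iff h, dominates_append_iff_drop_domPrefixLen h,
    dominates_singleton_iff, exists_two_le_swapSingletonOnes_iff hd]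
  exact (dominates_replicate_one_iff (k := 2) hd).symm

end swapTail

theorem stmt2_general (l : List ℕ) :
    ∀ n : ℕ,
      {b : List ℕ | (∀ x ∈ b, 1 ≤ x) ∧ b.sum = n ∧ Dominates b (l ++ [2])}.ncard =
      {b : List ℕ | (∀ x ∈ b, 1 ≤ x) ∧ b.sum = n ∧ Dominates b (l ++ [1, 1])}.ncard := by
  intro n
  refine Set.BijOn.ncard_eq (f := swapTail l) (Set.InvOn.bijOn (f' := swapTail l) ⟨?_, ?_⟩ ?_ ?_)
  · rintro b ⟨-, -, hb⟩
    exact swapTail_swapTail hb.of_append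
  · rintro b ⟨-, -, hb⟩
    exact swapTail_swapTail hb.of_append
  · rintro b ⟨hpos, hsum, hb⟩
    exact ⟨swapTail_pos hpos, (sum_swapTail l b).trans hsum,
      (dominates_swapTail_append_one_one_iff hpos hb.of_append).mpr hb⟩
  · rintro b ⟨hpos, hsum, hb⟩
    exact ⟨swapTail_pos hpos, (sum_swapTail l b).trans hsum,
      (dominates_swapTail_append_two_iff hpos hb.of_append).mpr hb⟩

/-- Lemma 2.4: replacing a final component `2` of a composition by `1,1` does
not change the number of compositions of each size dominating it. -/
theorem stmt2 (l : List ℕ) (hpos : ∀ x ∈ l, 1 ≤ x) :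
    ∀ n : ℕ,
      {b : List ℕ | (∀ x ∈ b, 1 ≤ x) ∧ b.sum = n ∧ Dominates b (l ++ [2])}.ncard =
      {b : List ℕ | (∀ x ∈ b, 1 ≤ x) ∧ b.sum = n ∧ Dominates b (l ++ [1, 1])}.ncard :=
  stmt2_general l
end

section
/- Let m ≥ 2 be an integer and let τ = τ₁τ₂⋯τ_k be an RGF of length k with exactly m distinct letters such that τ_i = i for each i ∈ [m−1]. Then, as an identity of formal power series in x (each factor 1 − jx being invertible), ∑_{n≥0} p_n(12⋯(m+1), τ) xⁿ = ∑_{n≥0} p_n(12⋯(m+1)) xⁿ − x^k · (1 − (m−1)x)^{−(k−m)} · (1 − mx)^{−1} · ∏_{j=1}^{m−1} (1 − jx)^{−1}. In particular, this generating function depends only on m and the size k of τ, not on τ itself. -/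
/-- The strictly increasing pattern `1 2 ⋯ r`. -/
def incPat (r : ℕ) : List ℕ := (List.range r).map (· + 1)

open List

lemma List.getD_mem {α : Type*} {l : List α} {i : ℕ} {d : α} (hi : i < l.length) :
    l.getD i d ∈ l := by
  rw [getD_eq_getElem _ _ hi]
  exact getElem_mem hi

lemma take_eq_range'_of_getD {l : List ℕ} {j : ℕ} (hj : j ≤ l.length)
    (h : ∀ i < j, l.getD i 0 = i + 1) : l.take j = range' 1 j := by
  refine ext_getElem (by simpa using hj) fun i hi hi' => ?_
  have := h i (by simpa using hi')
  rw [getD_eq_getElem _ _ (by simp at hi; omega)] at this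
  simp [this, add_comm]

lemma append_singleton_sublist_append_singleton_iff {α : Type*} {l w : List α} {b a : α} :
    l ++ [b] <+ w ++ [a] ↔ l ++ [b] <+ w ∨ (b = a ∧ l <+ w) := by
  rw [← reverse_sublist, ← reverse_sublist (l₁ := l ++ [b]), ← reverse_sublist (l₁ := l)]
  simp [sublist_cons_iff]

lemma take_succ_sublist_append_singleton_iff {α : Type*} {τ w : List α} {a : α} {i : ℕ}
    (hi : i < τ.length) :
    τ.take (i + 1) <+ w ++ [a] ↔ τ.take (i + 1) <+ w ∨ (τ[i]? = some a ∧ τ.take i <+ w) := by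
  rw [take_add_one, getElem?_eq_getElem hi, Option.toList_some,
    append_singleton_sublist_append_singleton_iff, Option.some_inj]

section Greedy

variable {α : Type*} [DecidableEq α]

def greedyStep (τ : List α) (i : ℕ) (a : α) : ℕ := if τ[i]? = some a then i + 1 else i

def greedyLen (τ w : List α) : ℕ := w.foldl (greedyStep τ) 0

@[simp] lemma greedyLen_nil (τ : List α) : greedyLen τ [] = 0 := rfl

lemma greedyLen_append_singleton (τ w : List α) (a : α) :
    greedyLen τ (w ++ [a]) = greedyStep τ (greedyLen τ w) a := by
  simp [greedyLen]

lemma greedyStep_eq_iff {τ : List α} {s i : ℕ} {a : α} :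
    greedyStep τ s a = i ↔ (s = i ∧ τ[i]? ≠ some a) ∨ (s + 1 = i ∧ τ[s]? = some a) := by
  unfold greedyStep
  split_ifs with h <;> grind

lemma greedyLen_le_length (τ w : List α) : greedyLen τ w ≤ τ.length := by
  induction w using reverseRecOn with
  | nil => simp
  | append_singleton w a ih =>
    rw [greedyLen_append_singleton, greedyStep]
    split_ifs with h
    · exact (List.getElem?_eq_some_iff.1 h).1
    · exact ih

lemma take_sublist_iff_le_greedyLen {τ w : List α} {i : ℕ} (hi : i ≤ τ.length) :
    τ.take i <+ w ↔ i ≤ greedyLen τ w := by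
  induction w using reverseRecOn generalizing i with
  | nil => simp only [greedyLen_nil, sublist_nil, ← length_eq_zero_iff, length_take]; omega
  | append_singleton w a ih =>
    cases i with
    | zero => simp
    | succ i =>
      rw [take_succ_sublist_append_singleton_iff hi, ih hi, ih (by omega),
        greedyLen_append_singleton, greedyStep]
      by_cases his : i = greedyLen τ w
      · subst his; split_ifs <;> simp_all
      · split_ifs <;> omega

lemma sublist_iff_greedyLen_eq {τ w : List α} : τ <+ w ↔ greedyLen τ w = τ.length := by
  rw [← take_length (l := τ), take_sublist_iff_le_greedyLen le_rfl, take_length]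
  exact ⟨fun h => le_antisymm (greedyLen_le_length τ w) h, ge_of_eq⟩

end Greedy

def wordMax (w : List ℕ) : ℕ := w.foldr max 0

lemma wordMax_le_iff {w : List ℕ} {M : ℕ} : wordMax w ≤ M ↔ ∀ x ∈ w, x ≤ M := by
  induction w with
  | nil => simp [wordMax]
  | cons a w ih => simp [wordMax, ← ih]

lemma le_wordMax_of_mem {w : List ℕ} {x : ℕ} (hx : x ∈ w) : x ≤ wordMax w :=
  wordMax_le_iff.1 le_rfl x hx

lemma wordMax_append_singleton (w : List ℕ) (a : ℕ) :
    wordMax (w ++ [a]) = max (wordMax w) a := by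
  induction w with
  | nil => simp [wordMax]
  | cons b w ih => simp only [wordMax, cons_append, foldr_cons] at ih ⊢; omega

lemma isRGF_iff {w : List ℕ} :
    IsRGF w ↔ (∀ x ∈ w, 1 ≤ x) ∧ ∀ i < w.length, w.getD i 0 ≤ wordMax (w.take i) + 1 := by
  refine and_congr_right fun hpos => ⟨fun ⟨h0, hsucc⟩ i hi => ?_, fun h => ⟨fun hw => ?_, ?_⟩⟩
  · cases i with
    | zero =>
      have := h0 (ne_nil_of_length_pos hi)
      simp only [take_zero, wordMax, foldr_nil]
      omega
    | succ i => exact hsucc i hi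
  · have h1 := hpos _ (getD_mem (d := 0) (length_pos_iff.2 hw))
    have h2 := h 0 (length_pos_iff.2 hw)
    simp only [take_zero, wordMax, foldr_nil] at h2
    omega
  · exact fun i hi => h (i + 1) hi

lemma isRGF_nil : IsRGF [] := isRGF_iff.2 ⟨by simp, by simp⟩

lemma isRGF_append_singleton_iff {w : List ℕ} {a : ℕ} :
    IsRGF (w ++ [a]) ↔ IsRGF w ∧ 1 ≤ a ∧ a ≤ wordMax w + 1 := by
  have hprefix : ∀ i < w.length, (w ++ [a]).getD i 0 ≤ wordMax ((w ++ [a]).take i) + 1 ↔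
      w.getD i 0 ≤ wordMax (w.take i) + 1 := fun i hi => by
    rw [getD_append _ _ _ _ hi, take_append_of_le_length hi.le]
  rw [isRGF_iff, isRGF_iff, forall_mem_append, forall_mem_singleton, length_append,
    length_singleton, Nat.forall_lt_succ_right, forall₂_congr hprefix,
    getD_append_right _ _ _ _ le_rfl, Nat.sub_self, getD_cons_zero,
    take_append_of_le_length le_rfl, take_length]
  tauto

namespace IsRGF

variable {w : List ℕ}

lemma of_append {l₁ l₂ : List ℕ} (h : IsRGF (l₁ ++ l₂)) : IsRGF l₁ := by
  induction l₂ using reverseRecOn with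
  | nil => simpa using h
  | append_singleton l₂ a ih =>
    rw [← append_assoc, isRGF_append_singleton_iff] at h
    exact ih h.1

lemma range'_sublist (h : IsRGF w) : range' 1 (wordMax w) <+ w := by
  induction w using reverseRecOn with
  | nil => simp [wordMax]
  | append_singleton w a ih =>
    obtain ⟨hw, -, ha⟩ := isRGF_append_singleton_iff.1 h
    rw [wordMax_append_singleton]
    rcases le_or_gt a (wordMax w) with hle | hlt
    · rw [max_eq_left hle]
      exact (ih hw).trans (sublist_append_left _ _)
    · obtain rfl : a = wordMax w + 1 := by omega
      rw [max_eq_right hlt.le, range'_1_concat, add_comm 1]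
      exact (ih hw).append (Sublist.refl _)

lemma range'_sublist_iff (h : IsRGF w) {j : ℕ} : range' 1 j <+ w ↔ j ≤ wordMax w := by
  refine ⟨fun hj => ?_, fun hj => (range'_sublist_right.2 hj).trans h.range'_sublist⟩
  rcases Nat.eq_zero_or_pos j with rfl | hpos
  · exact Nat.zero_le _
  · exact le_wordMax_of_mem (hj.subset (mem_range'_1.2 ⟨hpos, by omega⟩))

lemma mem_iff (h : IsRGF w) {x : ℕ} : x ∈ w ↔ 1 ≤ x ∧ x ≤ wordMax w :=
  ⟨fun hx => ⟨h.1 x hx, le_wordMax_of_mem hx⟩,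
    fun ⟨h1, h2⟩ => h.range'_sublist.subset (mem_range'_1.2 ⟨h1, by omega⟩)⟩

lemma card_toFinset (h : IsRGF w) : w.toFinset.card = wordMax w := by
  have : w.toFinset = Finset.Icc 1 (wordMax w) := by
    ext x
    simp [h.mem_iff]
  simp [this]

lemma wordMax_le_length (h : IsRGF w) : wordMax w ≤ w.length := by
  simpa using h.range'_sublist.length_le

lemma getD_le (h : IsRGF w) {i : ℕ} (hi : i < w.length) : w.getD i 0 ≤ i + 1 :=
  calc w.getD i 0 ≤ wordMax (w.take i) + 1 := (isRGF_iff.1 h).2 i hi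
    _ ≤ (w.take i).length + 1 := by
      gcongr
      exact (of_append (l₂ := w.drop i) (by rwa [take_append_drop])).wordMax_le_length
    _ ≤ i + 1 := by simp

end IsRGF

lemma incPat_eq_range' (r : ℕ) : incPat r = range' 1 r := by
  simp [incPat, range'_eq_map_range, add_comm]

lemma wordOrdIso_refl (s : List ℕ) : WordOrdIso s s := ⟨rfl, fun _ _ _ _ => Iff.rfl⟩

namespace WordOrdIso

variable {s t : List ℕ}

lemma getD_eq_iff (h : WordOrdIso s t) {i j : ℕ} (hi : i < s.length) (hj : j < s.length) :
    s.getD i 0 = s.getD j 0 ↔ t.getD i 0 = t.getD j 0 := by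
  have hij := h.2 i j hi hj
  have hji := h.2 j i hj hi
  omega

lemma nodup (h : WordOrdIso s t) (ht : t.Nodup) : s.Nodup := by
  rw [Nodup, pairwise_iff_getElem] at ht ⊢
  intro i j hi hj hij heq
  have := (h.getD_eq_iff hi hj).1 (by rw [getD_eq_getElem _ _ hi, getD_eq_getElem _ _ hj, heq])
  rw [getD_eq_getElem _ _ (h.1 ▸ hi), getD_eq_getElem _ _ (h.1 ▸ hj)] at this
  exact ht i j _ _ hij this

end WordOrdIso

lemma patContains_incPat_iff {w : List ℕ} (hw : IsRGF w) (r : ℕ) :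
    PatContains w (incPat r) ↔ r ≤ wordMax w := by
  rw [incPat_eq_range']
  refine ⟨fun ⟨s, hsw, hiso⟩ => ?_, fun hr => ⟨_, hw.range'_sublist_iff.2 hr, wordOrdIso_refl _⟩⟩
  calc r = s.toFinset.card := by rw [toFinset_card_of_nodup (hiso.nodup nodup_range'), hiso.1,
        length_range']
    _ ≤ w.toFinset.card := Finset.card_le_card fun x => by simpa using fun hx => hsw.subset hx
    _ = wordMax w := hw.card_toFinset

lemma eqOn_id_of_strictMonoOn_Icc {f : ℕ → ℕ} {a b : ℕ} (hf : StrictMonoOn f (Set.Icc a b))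
    (hmaps : Set.MapsTo f (Set.Icc a b) (Set.Icc a b)) : Set.EqOn f id (Set.Icc a b) := by
  intro t ht
  have hg : StrictMono (hmaps.restrict f _ _) := fun x y hxy => hf x.2 y.2 hxy
  exact congrArg Subtype.val (le_antisymm hg.apply_le hg.le_apply :
    hmaps.restrict f _ _ ⟨t, ht⟩ = ⟨t, ht⟩)

-- The letter of `s` at the first occurrence of `t` in `τ` is strictly increasing in
-- `t ∈ [1, max τ]`, hence equal to `t`.
lemma WordOrdIso.eq_of_isRGF {s τ : List ℕ} (hτ : IsRGF τ)
    (hs : ∀ x ∈ s, x ∈ Set.Icc 1 (wordMax τ)) (h : WordOrdIso s τ) : s = τ := by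
  have hfirst : ∀ t ∈ Set.Icc 1 (wordMax τ),
      τ.idxOf t < τ.length ∧ τ.getD (τ.idxOf t) 0 = t := fun t ht => by
    have hmem : t ∈ τ := hτ.mem_iff.2 ht
    have hlt := idxOf_lt_length_iff.2 hmem
    exact ⟨hlt, by rw [getD_eq_getElem _ _ hlt, getElem_idxOf]⟩
  have hc : Set.EqOn (fun t => s.getD (τ.idxOf t) 0) id (Set.Icc 1 (wordMax τ)) := by
    refine eqOn_id_of_strictMonoOn_Icc (fun t ht t' ht' htt' => ?_) fun t ht =>
      hs _ (getD_mem (h.1 ▸ (hfirst t ht).1))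
    refine (h.2 _ _ (h.1 ▸ (hfirst t ht).1) (h.1 ▸ (hfirst t' ht').1)).2 ?_
    rwa [(hfirst t ht).2, (hfirst t' ht').2]
  refine ext_getElem h.1 fun i hi hi' => ?_
  rw [← getD_eq_getElem s 0 hi, ← getD_eq_getElem τ 0 hi']
  have hv : τ.getD i 0 ∈ Set.Icc 1 (wordMax τ) := hτ.mem_iff.1 (getD_mem hi')
  obtain ⟨hq, hqv⟩ := hfirst _ hv
  calc s.getD i 0 = s.getD (τ.idxOf (τ.getD i 0)) 0 := (h.getD_eq_iff hi (h.1 ▸ hq)).2 hqv.symm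
    _ = τ.getD i 0 := hc hv

lemma patContains_iff_sublist {w τ : List ℕ} (hτ : IsRGF τ)
    (hw : ∀ x ∈ w, x ∈ Set.Icc 1 (wordMax τ)) : PatContains w τ ↔ τ <+ w :=
  ⟨fun ⟨_, hsw, hiso⟩ => hiso.eq_of_isRGF hτ (fun x hx => hw x (hsw.subset hx)) ▸ hsw,
    fun h => ⟨τ, h, wordOrdIso_refl τ⟩⟩

def boundedRGFs (m n : ℕ) : Set (List ℕ) := {w | IsRGF w ∧ wordMax w ≤ m ∧ w.length = n}

lemma boundedRGFs_finite (m n : ℕ) : (boundedRGFs m n).Finite := by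
  refine ((List.finite_length_eq (Fin (m + 1)) n).image (map Fin.val)).subset ?_
  rintro w ⟨-, hw, rfl⟩
  refine ⟨w.map (Fin.ofNat (m + 1)), by simp, ?_⟩
  rw [map_map]
  conv_rhs => rw [← map_id w]
  refine map_congr_left fun x hx => ?_
  simp [Nat.mod_eq_of_lt (Nat.lt_succ_of_le (wordMax_le_iff.1 hw x hx))]

lemma append_singleton_mem_boundedRGFs_iff {m n : ℕ} {w : List ℕ} {a : ℕ} :
    w ++ [a] ∈ boundedRGFs m (n + 1) ↔
      w ∈ boundedRGFs m n ∧ a ∈ Set.Icc 1 (min (wordMax w + 1) m) := by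
  simp only [boundedRGFs, Set.mem_ofPred_eq, isRGF_append_singleton_iff, wordMax_append_singleton,
    length_append, length_singleton, Set.mem_Icc, le_min_iff, max_le_iff]
  rw [Nat.add_right_cancel_iff]
  tauto

lemma ncard_eq_ncard_append_singleton {α : Type*} {S : Set (List α)} (hS : [] ∉ S) :
    S.ncard = {p : List α × α | p.1 ++ [p.2] ∈ S}.ncard := by
  have hinj : Function.Injective fun p : List α × α => p.1 ++ [p.2] := fun p q h => by
    obtain ⟨h1, h2⟩ := append_inj' h rfl
    exact Prod.ext h1 (by simpa using h2)
  rw [← Set.ncard_image_of_injective _ hinj]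
  congr 1
  ext w
  refine ⟨fun hw => ?_, fun ⟨p, hp, hpw⟩ => hpw ▸ hp⟩
  have hne : w ≠ [] := fun h => hS (h ▸ hw)
  exact ⟨(w.dropLast, w.getLast hne), by simpa [dropLast_append_getLast] using hw,
    dropLast_append_getLast hne⟩

def greedyLevel (m : ℕ) (τ : List ℕ) (i n : ℕ) : Set (List ℕ) :=
  {w ∈ boundedRGFs m n | greedyLen τ w = i}

def stayLetters (m : ℕ) (τ : List ℕ) (i : ℕ) : Set ℕ :=
  {a ∈ Set.Icc 1 (min (i + 1) m) | τ[i]? ≠ some a}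

def stayCount (m k i : ℕ) : ℕ := if i = k then m else min i (m - 1)

lemma greedyLevel_finite (m : ℕ) (τ : List ℕ) (i n : ℕ) : (greedyLevel m τ i n).Finite :=
  (boundedRGFs_finite m n).subset fun _ hw => hw.1

lemma greedyLevel_zero {m : ℕ} {τ : List ℕ} (hτ : IsRGF τ) (hne : τ ≠ []) (n : ℕ) :
    greedyLevel m τ 0 n = if n = 0 then {[]} else ∅ := by
  have htake : τ.take 1 = [1] :=
    take_eq_range'_of_getD (length_pos_iff.2 hne) fun i hi => by
      obtain rfl : i = 0 := by omega
      exact hτ.2.1 hne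
  ext w
  split_ifs with hn
  · constructor
    · rintro ⟨⟨-, -, hlen⟩, -⟩
      simpa [hn] using hlen
    · rintro rfl
      exact ⟨⟨isRGF_nil, by simp [wordMax], by simp [hn]⟩, rfl⟩
  · refine ⟨?_, fun h => h.elim⟩
    rintro ⟨⟨hw, -, hlen⟩, hgreedy⟩
    obtain ⟨x, hx⟩ := exists_mem_of_length_pos (l := w) (by omega)
    have h1 : 1 ∈ w := hw.mem_iff.2 ⟨le_rfl, (hw.1 x hx).trans (le_wordMax_of_mem hx)⟩
    have := (take_sublist_iff_le_greedyLen (τ := τ) (w := w) (i := 1)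
      (length_pos_iff.2 hne)).1 (by simpa [htake] using h1)
    omega

-- For `j ≤ m - 1`, `range' 1 j` is a prefix of `τ`, and it is a subsequence of the RGF `w` iff
-- `j ≤ max w`.
lemma min_wordMax_eq_min_greedyLen {m : ℕ} {τ w : List ℕ} (hτ : IsRGF τ) (hmax : wordMax τ = m)
    (hpre : ∀ i < m - 1, τ.getD i 0 = i + 1) (hw : IsRGF w) :
    min (wordMax w + 1) m = min (greedyLen τ w + 1) m := by
  have hlen : m - 1 ≤ τ.length := by have := hτ.wordMax_le_length; omega
  have key : ∀ j ≤ m - 1, j ≤ wordMax w ↔ j ≤ greedyLen τ w := fun j hj => by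
    rw [← hw.range'_sublist_iff, ← take_sublist_iff_le_greedyLen (by omega),
      take_eq_range'_of_getD (by omega) fun i hi => hpre i (by omega)]
  have h1 := key (min (wordMax w) (m - 1)) (min_le_right _ _)
  have h2 := key (min (greedyLen τ w) (m - 1)) (min_le_right _ _)
  omega

lemma append_singleton_mem_greedyLevel_iff {m : ℕ} {τ : List ℕ} (hτ : IsRGF τ)
    (hmax : wordMax τ = m) (hpre : ∀ i < m - 1, τ.getD i 0 = i + 1) {i n : ℕ} {w : List ℕ}
    {a : ℕ} : w ++ [a] ∈ greedyLevel m τ i (n + 1) ↔ w ∈ boundedRGFs m n ∧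
      a ∈ Set.Icc 1 (min (greedyLen τ w + 1) m) ∧ greedyStep τ (greedyLen τ w) a = i := by
  simp only [greedyLevel, Set.mem_sep_iff, append_singleton_mem_boundedRGFs_iff,
    greedyLen_append_singleton, and_assoc]
  refine and_congr_right fun hw => ?_
  rw [min_wordMax_eq_min_greedyLen hτ hmax hpre hw.1]

lemma getElem_mem_Icc {m : ℕ} {τ : List ℕ} (hτ : IsRGF τ) (hmax : wordMax τ = m) {i : ℕ}
    (hi : i < τ.length) : τ[i] ∈ Set.Icc 1 (min (i + 1) m) := by
  have hmem := hτ.mem_iff.1 (getElem_mem hi)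
  have hle := hτ.getD_le hi
  rw [getD_eq_getElem _ _ hi] at hle
  simp only [Set.mem_Icc, le_min_iff]
  omega

lemma ncard_stayLetters {m : ℕ} {τ : List ℕ} (hτ : IsRGF τ) (hmax : wordMax τ = m) {i : ℕ}
    (hi : i ≤ τ.length) :
    (stayLetters m τ i).ncard = stayCount m τ.length i := by
  unfold stayCount
  split_ifs with hik
  · have hm : m ≤ τ.length := hmax ▸ hτ.wordMax_le_length
    have : stayLetters m τ i = Set.Icc 1 m := by
      ext a
      simp [stayLetters, hik, show min (τ.length + 1) m = m by omega]
    simp [this]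
  · have hi' : i < τ.length := by omega
    have : stayLetters m τ i = Set.Icc 1 (min (i + 1) m) \ {τ[i]} := by
      ext a
      simp [stayLetters, getElem?_eq_getElem hi', eq_comm]
    rw [this, Set.ncard_sdiff_singleton_of_mem (getElem_mem_Icc hτ hmax hi'), Set.ncard_Icc_nat]
    omega

lemma ncard_greedyLevel_succ {m : ℕ} {τ : List ℕ} (hτ : IsRGF τ) (hmax : wordMax τ = m)
    (hpre : ∀ i < m - 1, τ.getD i 0 = i + 1) {i : ℕ} (hi : i < τ.length) (n : ℕ) :
    (greedyLevel m τ (i + 1) (n + 1)).ncard =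
      stayCount m τ.length (i + 1) * (greedyLevel m τ (i + 1) n).ncard
        + (greedyLevel m τ i n).ncard := by
  have hpairs : {p : List ℕ × ℕ | p.1 ++ [p.2] ∈ greedyLevel m τ (i + 1) (n + 1)} =
      greedyLevel m τ (i + 1) n ×ˢ stayLetters m τ (i + 1) ∪ greedyLevel m τ i n ×ˢ {τ[i]} := by
    ext ⟨w, a⟩
    rw [Set.mem_ofPred_eq, append_singleton_mem_greedyLevel_iff hτ hmax hpre, greedyStep_eq_iff]
    simp only [Set.mem_union, Set.mem_prod, greedyLevel, stayLetters, Set.mem_sep_iff,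
      Set.mem_singleton_iff]
    constructor
    · rintro ⟨hw, ha, ⟨hs, hne⟩ | ⟨hs, heq⟩⟩
      · exact Or.inl ⟨⟨hw, hs⟩, hs ▸ ha, hne⟩
      · obtain rfl : greedyLen τ w = i := by omega
        exact Or.inr ⟨⟨hw, rfl⟩, by simpa [getElem?_eq_getElem hi, eq_comm] using heq⟩
    · rintro (⟨⟨hw, hs⟩, ha, hne⟩ | ⟨⟨hw, hs⟩, rfl⟩)
      · exact ⟨hw, hs ▸ ha, Or.inl ⟨hs, hne⟩⟩
      · exact ⟨hw, hs ▸ getElem_mem_Icc hτ hmax hi,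
          Or.inr ⟨by omega, hs ▸ getElem?_eq_getElem hi⟩⟩
  have hdisj : Disjoint (greedyLevel m τ (i + 1) n ×ˢ stayLetters m τ (i + 1))
      (greedyLevel m τ i n ×ˢ {τ[i]}) :=
    Set.disjoint_left.2 fun p hp hp' => by have := hp.1.2.symm.trans hp'.1.2; omega
  rw [ncard_eq_ncard_append_singleton (by simp [greedyLevel, boundedRGFs]), hpairs,
    Set.ncard_union_eq hdisj ((greedyLevel_finite ..).prod
      ((Set.finite_Icc _ _).subset fun _ ha => ha.1))
      ((greedyLevel_finite ..).prod (Set.toFinite _)), Set.ncard_prod, Set.ncard_prod,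
    ncard_stayLetters hτ hmax hi, Set.ncard_singleton, mul_comm, mul_one]

open PowerSeries

lemma mk_eq_X_mul_mk_mul_inv {K : Type*} [Field K] {f g : ℕ → K} {c : K} (h0 : f 0 = 0)
    (hrec : ∀ n, f (n + 1) = c * f n + g n) : mk f = X * mk g * (1 - C c * X)⁻¹ := by
  rw [PowerSeries.eq_mul_inv_iff_mul_eq (by simp)]
  ext n
  cases n with
  | zero => simp [h0]
  | succ n => simp [mul_sub, ← mul_assoc, mul_comm _ (C c), coeff_succ_mul_X, hrec]

lemma mk_ncard_greedyLevel {K : Type*} [Field K] {m : ℕ} {τ : List ℕ} (hτ : IsRGF τ)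
    (hne : τ ≠ []) (hmax : wordMax τ = m) (hpre : ∀ i < m - 1, τ.getD i 0 = i + 1) {i : ℕ}
    (hi : i ≤ τ.length) :
    mk (fun n => ((greedyLevel m τ i n).ncard : K)) =
      X ^ i * ∏ j ∈ Finset.Icc 1 i, (1 - C (stayCount m τ.length j : K) * X)⁻¹ := by
  induction i with
  | zero =>
    ext n
    simp only [greedyLevel_zero hτ hne, pow_zero, one_mul, Finset.Icc_eq_empty_of_lt zero_lt_one,
      Finset.prod_empty, coeff_mk, coeff_one]
    split_ifs <;> simp
  | succ i ih =>
    have h0 : greedyLevel m τ (i + 1) 0 = ∅ := Set.eq_empty_of_forall_notMem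
      fun w ⟨⟨_, _, hw⟩, hi⟩ => by simp [length_eq_zero_iff.1 hw] at hi
    rw [mk_eq_X_mul_mk_mul_inv (by simp [h0]) fun n => by
      rw [ncard_greedyLevel_succ hτ hmax hpre hi n, Nat.cast_add, Nat.cast_mul], ih (by omega),
      Finset.prod_Icc_succ_top (by omega)]
    ring

lemma prod_Icc_inv_one_sub_stayCount {K : Type*} [Field K] {m k : ℕ} (hm : 1 ≤ m)
    (hmk : m ≤ k) :
    ∏ j ∈ Finset.Icc 1 k, (1 - C (stayCount m k j : K) * X)⁻¹ =
      ((1 - C ((m : K) - 1) * X)⁻¹) ^ (k - m) * (1 - C (m : K) * X)⁻¹ *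
        ∏ j ∈ Finset.Icc 1 (m - 1), (1 - C (j : K) * X)⁻¹ := by
  obtain ⟨k, rfl⟩ : ∃ k', k = k' + 1 := ⟨k - 1, by omega⟩
  have hIoc (a : ℕ) : Finset.Icc 1 a = Finset.Ioc 0 a := Finset.Icc_add_one_left_eq_Ioc 0 a
  have hlow : ∀ j ∈ Finset.Ioc 0 (m - 1),
      (1 - C (stayCount m (k + 1) j : K) * X)⁻¹ = (1 - C (j : K) * X)⁻¹ := fun j hj => by
    rw [Finset.mem_Ioc] at hj
    rw [stayCount, if_neg (by omega), min_eq_left hj.2]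
  have hhigh : ∀ j ∈ Finset.Ioc (m - 1) k,
      (1 - C (stayCount m (k + 1) j : K) * X)⁻¹ = (1 - C ((m : K) - 1) * X)⁻¹ := fun j hj => by
    rw [Finset.mem_Ioc] at hj
    rw [stayCount, if_neg (by omega), min_eq_right (by omega), Nat.cast_sub hm, Nat.cast_one]
  rw [Finset.prod_Icc_succ_top (by omega), stayCount, if_pos rfl, hIoc, hIoc,
    ← Finset.prod_Ioc_consecutive _ (Nat.zero_le (m - 1)) (by omega : m - 1 ≤ k),
    Finset.prod_congr rfl hlow, Finset.prod_congr rfl hhigh, Finset.prod_const, Nat.card_Ioc,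
    show k - (m - 1) = k + 1 - m by omega]
  ring

lemma pCount_incPat (m n : ℕ) : pCount n {incPat (m + 1)} = (boundedRGFs m n).ncard := by
  unfold pCount
  congr 1
  ext w
  simp only [Set.mem_singleton_iff, forall_eq, boundedRGFs, PatAvoids, Set.mem_ofPred_eq]
  constructor
  · rintro ⟨hw, hlen, hinc⟩
    exact ⟨hw, by rw [patContains_incPat_iff hw] at hinc; omega, hlen⟩
  · rintro ⟨hw, hmw, hlen⟩
    exact ⟨hw, hlen, by rw [patContains_incPat_iff hw]; omega⟩

lemma pCount_add_ncard_greedyLevel {m : ℕ} {τ : List ℕ} (hτ : IsRGF τ) (hmax : wordMax τ = m)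
    (n : ℕ) : pCount n {incPat (m + 1), τ} + (greedyLevel m τ τ.length n).ncard =
      pCount n {incPat (m + 1)} := by
  have hcontains {w : List ℕ} (hw : w ∈ boundedRGFs m n) : PatContains w τ ↔ τ <+ w :=
    patContains_iff_sublist hτ fun x hx => hmax ▸ (hw.1.mem_iff.1 hx).imp_right (·.trans hw.2.1)
  have hset : {w | IsRGF w ∧ w.length = n ∧
      ∀ p ∈ ({incPat (m + 1), τ} : Set (List ℕ)), PatAvoids w p} =
        boundedRGFs m n \ greedyLevel m τ τ.length n := by
    ext w
    simp only [Set.mem_insert_iff, Set.mem_singleton_iff, forall_eq_or_imp, forall_eq,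
      Set.mem_sdiff, greedyLevel, boundedRGFs, PatAvoids, Set.mem_ofPred_eq]
    constructor
    · rintro ⟨hw, hlen, hinc, hτw⟩
      have hmw : wordMax w ≤ m := by rw [patContains_incPat_iff hw] at hinc; omega
      exact ⟨⟨hw, hmw, hlen⟩, fun h => hτw ((hcontains h.1).2 (sublist_iff_greedyLen_eq.2 h.2))⟩
    · rintro ⟨hbdd, hnot⟩
      refine ⟨hbdd.1, hbdd.2.2, by rw [patContains_incPat_iff hbdd.1]; omega, fun h => hnot
        ⟨hbdd, sublist_iff_greedyLen_eq.1 ((hcontains hbdd).1 h)⟩⟩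
  rw [pCount, hset, pCount_incPat,
    Set.ncard_sdiff_add_ncard_of_subset (fun _ h => h.1) (boundedRGFs_finite m n)]

open PowerSeries in
/-- Theorem 2.7: generating function for partitions avoiding `12⋯(m+1)` and a
pattern `τ` of length `k` with `m` blocks whose `i`-th letter is `i` for `i ≤ m-1`. -/
theorem stmt3 (m k : ℕ) (hm : 2 ≤ m) (τ : List ℕ) (hτ : IsRGF τ)
    (hlen : τ.length = k) (hblocks : τ.toFinset.card = m)
    (hpre : ∀ i, i < m - 1 → τ.getD i 0 = i + 1) :
    PowerSeries.mk (fun n => (pCount n {incPat (m + 1), τ} : ℚ))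
      = PowerSeries.mk (fun n => (pCount n {incPat (m + 1)} : ℚ))
        - (X : PowerSeries ℚ) ^ k
          * ((1 - C (R := ℚ) ((m : ℚ) - 1) * X)⁻¹) ^ (k - m)
          * (1 - C (R := ℚ) (m : ℚ) * X)⁻¹
          * ∏ j ∈ Finset.Icc 1 (m - 1), (1 - C (R := ℚ) (j : ℚ) * X)⁻¹ := by
  have hmax : wordMax τ = m := hτ.card_toFinset ▸ hblocks
  have hne : τ ≠ [] := by rintro rfl; simp at hblocks; omega
  have hmk : m ≤ k := hlen ▸ hmax ▸ hτ.wordMax_le_length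
  have hsplit : mk (fun n => (pCount n {incPat (m + 1), τ} : ℚ)) =
      mk (fun n => (pCount n {incPat (m + 1)} : ℚ)) -
        mk (fun n => ((greedyLevel m τ k n).ncard : ℚ)) := by
    ext n
    simp [← pCount_add_ncard_greedyLevel hτ hmax n, hlen]
  rw [hsplit, mk_ncard_greedyLevel hτ hne hmax hpre hlen.ge, hlen,
    prod_Icc_inv_one_sub_stayCount (by omega) hmk]
  ring
end

section
/- Fix k ≥ 2. For every n ≥ 1, p_n(122, 1^k) = p_n(122, 12⋯k) = ∑_{i=0}^{k−2} C(n−1, i), where 1^k is the constant pattern of k ones and 12⋯k is the strictly increasing pattern of length k. -/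
/-!
In an RGF avoiding `122` no letter other than `1` repeats, so every letter after the first is
either `1` or a new maximum. Such words of length `n` are therefore encoded by bit strings of
length `n - 1` (`ofBits`): the word has one more `1` than the string has `false`s, and one more
block than the string has `true`s. Avoiding `1^k`, resp. `12⋯k`, says exactly that the first,
resp. second, of these numbers is less than `k`, so both counts equal the number of bit strings
of length `n - 1` with at most `k - 2` entries of a given kind, `∑_{i ≤ k - 2} C(n - 1, i)`.
-/

theorem foldr_max_append_singleton (u : List ℕ) (x : ℕ) :
    (u ++ [x]).foldr max 0 = max (u.foldr max 0) x := by
  induction u with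
  | nil => simp
  | cons y u ih => simp only [List.cons_append, List.foldr_cons, ih, max_assoc]

theorem isRGF_append_singleton_iff_s5 {u : List ℕ} (hu : u ≠ []) (x : ℕ) :
    IsRGF (u ++ [x]) ↔ IsRGF u ∧ 1 ≤ x ∧ x ≤ u.foldr max 0 + 1 := by
  have hlen : 0 < u.length := List.length_pos_iff.mpr hu
  have hget {i : ℕ} (hi : i < u.length) : (u ++ [x]).getD i 0 = u.getD i 0 :=
    List.getD_append _ _ _ _ hi
  have htake {i : ℕ} (hi : i ≤ u.length) : (u ++ [x]).take i = u.take i :=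
    List.take_append_of_le_length hi
  have hlast : (u ++ [x]).getD u.length 0 = x := by simp
  constructor
  · rintro ⟨hpos, hhead, hstep⟩
    refine ⟨⟨fun y hy => hpos y (by simp [hy]), fun _ => ?_, fun i hi => ?_⟩,
      hpos x (by simp), ?_⟩
    · rw [← hget hlen]; exact hhead (by simp)
    · rw [← hget hi, ← htake hi.le]; exact hstep i (by simp; omega)
    · have := hstep (u.length - 1) (by simp; omega)
      rwa [Nat.sub_add_cancel hlen, hlast, htake le_rfl, List.take_length] at this
  · rintro ⟨⟨hpos, hhead, hstep⟩, hx, hxle⟩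
    refine ⟨fun y hy => ?_, fun _ => ?_, fun i hi => ?_⟩
    · rcases List.mem_append.mp hy with hy | hy
      · exact hpos y hy
      · simp_all
    · rw [hget hlen]; exact hhead hu
    · rcases Nat.lt_or_ge (i + 1) u.length with hi' | hi'
      · rw [hget hi', htake hi'.le]; exact hstep i hi'
      · have hi_last : i + 1 = u.length := by simp at hi; omega
        rwa [hi_last, hlast, htake le_rfl, List.take_length]

def ofBits (b : List Bool) : List ℕ :=
  b.foldl (fun w c => w ++ [if c then w.foldr max 0 + 1 else 1]) [1]

theorem ofBits_nil : ofBits [] = [1] := rfl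

theorem ofBits_concat (b : List Bool) (c : Bool) :
    ofBits (b ++ [c]) = ofBits b ++ [if c then (ofBits b).foldr max 0 + 1 else 1] := by
  simp only [ofBits, List.foldl_append, List.foldl_cons, List.foldl_nil]

theorem ofBits_ne_nil (b : List Bool) : ofBits b ≠ [] := by
  induction b using List.reverseRecOn <;> simp [ofBits_nil, ofBits_concat]

theorem length_ofBits (b : List Bool) : (ofBits b).length = b.length + 1 := by
  induction b using List.reverseRecOn with
  | nil => rfl
  | append_singleton b c ih => simp [ofBits_concat, ih]

theorem foldr_max_ofBits (b : List Bool) : (ofBits b).foldr max 0 = b.count true + 1 := by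
  induction b using List.reverseRecOn with
  | nil => rfl
  | append_singleton b c ih =>
    rw [ofBits_concat, foldr_max_append_singleton, ih]
    cases c <;> simp

theorem le_foldr_max_of_mem {w : List ℕ} {x : ℕ} (hx : x ∈ w) : x ≤ w.foldr max 0 :=
  List.le_max_of_le' 0 hx le_rfl

theorem count_one_ofBits (b : List Bool) : (ofBits b).count 1 = b.count false + 1 := by
  induction b using List.reverseRecOn with
  | nil => rfl
  | append_singleton b c ih =>
    cases c <;> simp [ofBits_concat, List.count_append, foldr_max_ofBits, ih]

theorem count_ofBits_le_one (b : List Bool) {v : ℕ} (hv : v ≠ 1) :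
    (ofBits b).count v ≤ 1 := by
  induction b using List.reverseRecOn with
  | nil => simp [ofBits_nil, Ne.symm hv]
  | append_singleton b c ih =>
    cases c
    · simpa [ofBits_concat, List.count_append, Ne.symm hv] using ih
    · rw [ofBits_concat, List.count_append]
      by_cases hnew : v = (ofBits b).foldr max 0 + 1
      · have : v ∉ ofBits b := fun hmem => by have := le_foldr_max_of_mem hmem; omega
        rw [hnew] at this ⊢
        simp [List.count_eq_zero.mpr this]
      · simpa [Ne.symm hnew] using ih

theorem range'_sublist_ofBits (b : List Bool) :
    (List.range' 1 (b.count true + 1)).Sublist (ofBits b) := by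
  induction b using List.reverseRecOn with
  | nil => simp [ofBits_nil]
  | append_singleton b c ih =>
    cases c
    · simpa [ofBits_concat] using ih.trans (List.sublist_append_left _ _)
    · simpa [ofBits_concat, foldr_max_ofBits, List.range'_concat, add_comm 1]
        using ih.append_right [_]

theorem map_tail_ofBits (b : List Bool) : (ofBits b).tail.map (· != 1) = b := by
  induction b using List.reverseRecOn with
  | nil => rfl
  | append_singleton b c ih =>
    rw [ofBits_concat, List.tail_append_singleton_of_ne_nil (ofBits_ne_nil b), List.map_append,
      ih]
    cases c <;> simp [foldr_max_ofBits]

theorem ofBits_injective : Function.Injective ofBits := fun b b' h => by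
  rw [← map_tail_ofBits b, h, map_tail_ofBits]

theorem isRGF_ofBits (b : List Bool) : IsRGF (ofBits b) := by
  induction b using List.reverseRecOn with
  | nil => simp [IsRGF, ofBits_nil]
  | append_singleton b c ih =>
    rw [ofBits_concat, isRGF_append_singleton_iff_s5 (ofBits_ne_nil b)]
    cases c <;> simp [ih]

theorem wordOrdIso_122_iff {s : List ℕ} :
    WordOrdIso s [1, 2, 2] ↔ ∃ a v, a < v ∧ s = [a, v, v] := by
  constructor
  · rintro ⟨hlen, hiso⟩
    match s, hlen with
    | [a, v, v'], _ =>
      have h01 := hiso 0 1 (by simp) (by simp)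
      have h12 := hiso 1 2 (by simp) (by simp)
      have h21 := hiso 2 1 (by simp) (by simp)
      simp only [List.getD_cons_zero, List.getD_cons_succ] at h01 h12 h21
      exact ⟨a, v, by omega, by simp; omega⟩
  · rintro ⟨a, v, hav, rfl⟩
    refine ⟨rfl, fun i j hi hj => ?_⟩
    simp only [List.length_cons, List.length_nil] at hi hj
    interval_cases i <;> interval_cases j <;> simp <;> omega

theorem patContains_replicate_iff (w : List ℕ) (k : ℕ) :
    PatContains w (List.replicate k 1) ↔ ∃ v, k ≤ w.count v := by
  constructor
  · rintro ⟨s, hsub, hlen, hiso⟩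
    rw [List.length_replicate] at hlen
    refine ⟨s.getD 0 0, List.replicate_sublist_iff.mp
      (List.eq_replicate_iff.mpr ⟨hlen, fun x hx => ?_⟩ ▸ hsub)⟩
    obtain ⟨i, hi, rfl⟩ := List.getElem_of_mem hx
    have hpos : 0 < s.length := by omega
    have h1 := hiso 0 i hpos hi
    have h2 := hiso i 0 hi hpos
    rw [List.getD_replicate _ (by omega : 0 < k), List.getD_replicate _ (by omega : i < k),
      List.getD_eq_getElem _ _ hi] at h1 h2
    rw [List.getD_eq_getElem _ _ hpos] at h1 h2 ⊢
    simp only [lt_irrefl, iff_false] at h1 h2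
    omega
  · rintro ⟨v, hv⟩
    refine ⟨_, List.replicate_sublist_iff.mpr hv, by simp, fun i j hi hj => ?_⟩
    simp_all

theorem incPat_eq_range'_s5 (k : ℕ) : incPat k = List.range' 1 k := by
  simp [incPat, List.range'_eq_map_range, add_comm]

theorem patContains_incPat_iff_s5 (w : List ℕ) (k : ℕ) :
    PatContains w (incPat k) ↔ ∃ s : List ℕ, s.Sublist w ∧ s.length = k ∧ s.SortedLT := by
  simp only [PatContains, WordOrdIso, incPat_eq_range'_s5, List.length_range']
  refine exists_congr fun s => and_congr_right fun _ => and_congr_right fun hlen => ?_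
  have hgetD {i : ℕ} (hi : i < k) : (List.range' 1 k).getD i 0 = 1 + i := by
    rw [List.getD_eq_getElem _ _ (by simpa using hi), List.getElem_range', one_mul]
  constructor
  · intro hiso
    refine List.sortedLT_iff_getElem_lt_getElem_of_lt.mpr fun i j hi hj hij => ?_
    have := hiso i j hi hj
    rw [hgetD (hlen ▸ hi), hgetD (hlen ▸ hj), List.getD_eq_getElem _ _ hi,
      List.getD_eq_getElem _ _ hj] at this
    exact this.mpr (by omega)
  · intro hsorted i j hi hj
    rw [hgetD (hlen ▸ hi), hgetD (hlen ▸ hj), List.getD_eq_getElem _ _ hi,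
      List.getD_eq_getElem _ _ hj, hsorted.getElem_lt_getElem_iff]
    omega

theorem PatContains.of_sublist {w w' p : List ℕ} (h : PatContains w' p) (hw : w'.Sublist w) :
    PatContains w p :=
  let ⟨s, hs, hiso⟩ := h
  ⟨s, hs.trans hw, hiso⟩

theorem patAvoids_122_ofBits (b : List Bool) : PatAvoids (ofBits b) [1, 2, 2] := by
  rintro ⟨s, hsub, hiso⟩
  obtain ⟨a, v, hav, rfl⟩ := wordOrdIso_122_iff.mp hiso
  have ha : 1 ≤ a := (isRGF_ofBits b).1 a (hsub.subset (by simp))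
  have hcount := hsub.count_le v
  simp only [List.count_cons, List.count_nil, beq_iff_eq, hav.ne, if_false, if_true] at hcount
  have := count_ofBits_le_one b (v := v) (by omega)
  omega

theorem patContains_replicate_ofBits_iff (b : List Bool) (k : ℕ) :
    PatContains (ofBits b) (List.replicate k 1) ↔ k ≤ b.count false + 1 := by
  rw [patContains_replicate_iff, ← count_one_ofBits]
  refine ⟨fun ⟨v, hv⟩ => ?_, fun hk => ⟨1, hk⟩⟩
  rcases eq_or_ne v 1 with rfl | hv1
  · exact hv
  · have := count_ofBits_le_one b hv1
    have := count_one_ofBits b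
    omega

theorem patContains_incPat_ofBits_iff (b : List Bool) (k : ℕ) :
    PatContains (ofBits b) (incPat k) ↔ k ≤ b.count true + 1 := by
  rw [patContains_incPat_iff_s5]
  constructor
  · rintro ⟨s, hsub, rfl, hsorted⟩
    have hIcc : s.toFinset ⊆ Finset.Icc 1 (b.count true + 1) := fun x hx => by
      have hx := hsub.subset (List.mem_toFinset.mp hx)
      rw [Finset.mem_Icc, ← foldr_max_ofBits]
      exact ⟨(isRGF_ofBits b).1 x hx, le_foldr_max_of_mem hx⟩
    simpa [List.toFinset_card_of_nodup hsorted.nodup] using Finset.card_le_card hIcc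
  · intro hk
    exact ⟨List.range' 1 k, (List.range'_sublist_right.mpr hk).trans (range'_sublist_ofBits b),
      List.length_range', List.sortedLT_range' _ _ one_ne_zero⟩

theorem exists_ofBits_of_avoids_122 {w : List ℕ} (hw : IsRGF w) (hne : w ≠ [])
    (hav : PatAvoids w [1, 2, 2]) : ∃ b, ofBits b = w := by
  induction w using List.reverseRecOn with
  | nil => exact absurd rfl hne
  | append_singleton u x ih =>
    rcases eq_or_ne u [] with rfl | hu
    · exact ⟨[], by simpa [ofBits_nil] using (hw.2.1 (by simp)).symm⟩
    obtain ⟨hrgf, hx1, hxle⟩ := (isRGF_append_singleton_iff_s5 hu x).mp hw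
    obtain ⟨b, rfl⟩ := ih hrgf hu fun h => hav (h.of_sublist (List.sublist_append_left _ _))
    rw [foldr_max_ofBits] at hxle
    rcases eq_or_lt_of_le hx1 with hx | hx
    · exact ⟨b ++ [false], by simp [ofBits_concat, hx]⟩
    rcases eq_or_lt_of_le hxle with hx' | hx'
    · exact ⟨b ++ [true], by simp [ofBits_concat, foldr_max_ofBits, hx']⟩
    -- an old letter `x ≥ 2` would be the second `2` of a `122`
    refine absurd ⟨[1, x, x], ?_, wordOrdIso_122_iff.mpr ⟨1, x, hx, rfl⟩⟩ hav
    have h1x : [1, x].Sublist (List.range' 1 (b.count true + 1)) := by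
      rw [List.range'_succ]
      exact (List.singleton_sublist.mpr
        (List.mem_range'_1.mpr ⟨by omega, by omega⟩)).cons_cons 1
    exact (h1x.trans (range'_sublist_ofBits b)).append_right [x]

theorem pCount_122_eq_ncard {n : ℕ} (hn : 1 ≤ n) (τ : List ℕ) :
    pCount n {[1, 2, 2], τ} =
      {b : List Bool | b.length = n - 1 ∧ PatAvoids (ofBits b) τ}.ncard := by
  rw [pCount, ← Set.ncard_image_of_injective _ ofBits_injective]
  congr 1
  ext w
  simp only [Set.mem_insert_iff, Set.mem_singleton_iff, forall_eq_or_imp, forall_eq,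
    Set.mem_ofPred_eq, Set.mem_image]
  constructor
  · rintro ⟨hw, hlen, hav, hτ⟩
    obtain ⟨b, rfl⟩ := exists_ofBits_of_avoids_122 hw (by rintro rfl; simp at hlen; omega) hav
    exact ⟨b, ⟨by rw [length_ofBits] at hlen; omega, hτ⟩, rfl⟩
  · rintro ⟨b, ⟨hlen, hτ⟩, rfl⟩
    exact ⟨isRGF_ofBits b, by rw [length_ofBits]; omega, patAvoids_122_ofBits b, hτ⟩

def boolWords : ℕ → Finset (List Bool)
  | 0 => {[]}
  | m + 1 => (boolWords m).image (true :: ·) ∪ (boolWords m).image (false :: ·)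

theorem mem_boolWords {m : ℕ} {b : List Bool} : b ∈ boolWords m ↔ b.length = m := by
  induction m generalizing b with
  | zero => simp [boolWords]
  | succ m ih =>
    cases b with
    | nil => simp [boolWords]
    | cons c b => cases c <;> simp [boolWords, ih]

theorem card_filter_count_boolWords (a : Bool) :
    ∀ m j, ((boolWords m).filter (·.count a = j)).card = m.choose j
  | 0, j => by cases j <;> rfl
  | m + 1, j => by
    have hdisj :
        Disjoint ((boolWords m).image (true :: ·)) ((boolWords m).image (false :: ·)) := by
      simp [Finset.disjoint_left]
    rw [boolWords, Finset.filter_union,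
      Finset.card_union_of_disjoint (Finset.disjoint_filter_filter hdisj),
      Finset.filter_image, Finset.filter_image,
      Finset.card_image_of_injective _ List.cons_injective,
      Finset.card_image_of_injective _ List.cons_injective]
    cases a <;> cases j <;>
      simp [card_filter_count_boolWords, Nat.choose_succ_succ, add_comm]

theorem ncard_count_le (m c : ℕ) (a : Bool) :
    {b : List Bool | b.length = m ∧ b.count a ≤ c}.ncard =
      ∑ j ∈ Finset.range (c + 1), m.choose j := by
  have hset : {b : List Bool | b.length = m ∧ b.count a ≤ c} =
      ↑((boolWords m).filter (·.count a ≤ c)) := by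
    ext b
    simp [mem_boolWords]
  rw [hset, Set.ncard_coe_finset, Finset.card_eq_sum_card_fiberwise (f := (·.count a))
    (t := Finset.range (c + 1)) (fun b hb => by simp at hb ⊢; omega)]
  refine Finset.sum_congr rfl fun j hj => ?_
  rw [← card_filter_count_boolWords a m j, Finset.filter_filter]
  congr 1
  refine Finset.filter_congr fun b _ => ⟨And.right, fun h => ⟨?_, h⟩⟩
  rw [Finset.mem_range] at hj
  omega

/-- Proposition 2.14: `p_n(122, 1^k) = p_n(122, 12⋯k) = ∑_{i=0}^{k-2} C(n-1, i)`. -/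
theorem stmt5 (k : ℕ) (hk : 2 ≤ k) :
    ∀ n : ℕ, 1 ≤ n →
      pCount n {[1,2,2], List.replicate k 1} = pCount n {[1,2,2], incPat k} ∧
      pCount n {[1,2,2], List.replicate k 1}
        = ∑ i ∈ Finset.range (k - 1), Nat.choose (n - 1) i := by
  intro n hn
  have hcount (a : Bool) : {b : List Bool | b.length = n - 1 ∧ b.count a ≤ k - 2}.ncard
      = ∑ i ∈ Finset.range (k - 1), Nat.choose (n - 1) i := by
    rw [ncard_count_le, show k - 2 + 1 = k - 1 by omega]
  have hones : pCount n {[1,2,2], List.replicate k 1}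
      = {b : List Bool | b.length = n - 1 ∧ b.count false ≤ k - 2}.ncard := by
    simp only [pCount_122_eq_ncard hn, PatAvoids, patContains_replicate_ofBits_iff]
    congr! 4
    omega
  have hinc : pCount n {[1,2,2], incPat k}
      = {b : List Bool | b.length = n - 1 ∧ b.count true ≤ k - 2}.ncard := by
    simp only [pCount_122_eq_ncard hn, PatAvoids, patContains_incPat_ofBits_iff]
    congr! 4
    omega
  exact ⟨by rw [hones, hinc, hcount, hcount], by rw [hones, hcount]⟩
end

section
/- For every n ≥ 2, p_n(1221, 1232) = p_n(1221, 1223) = 1 + (n−1)·2^{n−2}. -/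
def IsRGFFrom : ℕ → List ℕ → Prop
  | _, [] => True
  | m, x :: t => 1 ≤ x ∧ x ≤ m + 1 ∧ IsRGFFrom (max m x) t

theorem isRGFFrom_iff_getD {m : ℕ} {w : List ℕ} :
    IsRGFFrom m w ↔ (∀ x ∈ w, 1 ≤ x) ∧
      ∀ i < w.length, w.getD i 0 ≤ (w.take i).foldl max m + 1 := by
  induction w generalizing m with
  | nil => simp [IsRGFFrom]
  | cons x t ih =>
    simp only [IsRGFFrom, ih, List.mem_cons, forall_eq_or_imp, List.length_cons]
    constructor
    · rintro ⟨hx, hxm, ht, hi⟩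
      refine ⟨⟨hx, ht⟩, fun i hi' => ?_⟩
      cases i with
      | zero => simpa using hxm
      | succ i => simpa using hi i (by omega)
    · rintro ⟨⟨hx, ht⟩, hi⟩
      exact ⟨hx, by simpa using hi 0 (by omega), ht,
        fun i h => by simpa using hi (i + 1) (by omega)⟩

theorem isRGFFrom_append {m : ℕ} {u t : List ℕ} :
    IsRGFFrom m (u ++ t) ↔ IsRGFFrom m u ∧ IsRGFFrom (u.foldl max m) t := by
  induction u generalizing m with
  | nil => simp [IsRGFFrom]
  | cons x u ih => simp [IsRGFFrom, ih, and_assoc]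

theorem isRGFFrom_replicate {m v : ℕ} (k : ℕ) (hv₁ : 1 ≤ v) (hv : v ≤ m + 1) :
    IsRGFFrom m (List.replicate k v) := by
  induction k generalizing m with
  | zero => trivial
  | succ k ih => exact ⟨hv₁, hv, ih (by omega)⟩

namespace IsRGFFrom

theorem one_le {m x : ℕ} {w : List ℕ} (hw : IsRGFFrom m w) (hx : x ∈ w) : 1 ≤ x :=
  (isRGFFrom_iff_getD.1 hw).1 x hx

theorem mem_of_lt_of_le {m v : ℕ} {u : List ℕ} (hu : IsRGFFrom m u) (hmv : m < v)
    (hv : v ≤ u.foldl max m) : v ∈ u := by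
  induction u generalizing m with
  | nil => simp at hv; omega
  | cons x u ih =>
    obtain ⟨-, hxm, hu⟩ := hu
    by_cases hvx : v = x
    · simp [hvx]
    · exact List.mem_cons_of_mem _ (ih hu (by omega) hv)

theorem cons_cons_sublist {m a b : ℕ} {l w : List ℕ} (hw : IsRGFFrom m w)
    (hbl : (b :: l).Sublist w) (hma : m < a) (hab : a < b) : (a :: b :: l).Sublist w := by
  obtain ⟨l₁, l₂, rfl, hb, hl⟩ := List.cons_sublist_iff.1 hbl
  obtain ⟨u, v, rfl⟩ := List.append_of_mem hb
  obtain ⟨hu, hbv⟩ := isRGFFrom_append.1 (isRGFFrom_append.1 hw).1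
  have hbu : b ≤ u.foldl max m + 1 := hbv.2.1
  have hau : a ∈ u := hu.mem_of_lt_of_le hma (by omega)
  simpa using (List.singleton_sublist.2 hau).append
    ((hl.trans (List.sublist_append_right v l₂)).cons_cons b)

end IsRGFFrom

theorem isRGF_iff_isRGFFrom_zero {w : List ℕ} : IsRGF w ↔ IsRGFFrom 0 w := by
  rw [isRGFFrom_iff_getD, IsRGF]
  cases w with
  | nil => simp
  | cons x t =>
    simp only [ne_eq, reduceCtorEq, not_false_eq_true, forall_const, List.getD_cons_zero,
      List.foldl_eq_foldr]
    constructor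
    · rintro ⟨h₁, h₂, h₃⟩
      refine ⟨h₁, fun i hi => ?_⟩
      cases i with
      | zero => simp [h₂]
      | succ j => exact h₃ j hi
    · rintro ⟨h₁, h₂⟩
      have hx₁ := h₁ x (by simp)
      have hx₂ : x ≤ 1 := by simpa using h₂ 0 (by simp)
      exact ⟨h₁, by omega, fun j hj => h₂ (j + 1) hj⟩

theorem isRGF_one_cons {t : List ℕ} : IsRGF (1 :: t) ↔ IsRGFFrom 1 t := by
  simp [isRGF_iff_isRGFFrom_zero, IsRGFFrom]

theorem IsRGF.exists_eq_one_cons {w : List ℕ} (hw : IsRGF w) (hne : w ≠ []) :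
    ∃ t, w = 1 :: t := by
  obtain ⟨x, t, rfl⟩ := List.exists_cons_of_ne_nil hne
  obtain ⟨h₁, h₂, -⟩ := isRGF_iff_isRGFFrom_zero.1 hw
  exact ⟨t, by rw [show x = 1 by omega]⟩

theorem pCount_succ_eq_card {P Q : List ℕ} {G : Finset (List ℕ)} {n : ℕ}
    (hG : ∀ t, t ∈ G ↔
      t.length = n ∧ IsRGFFrom 1 t ∧ PatAvoids (1 :: t) P ∧ PatAvoids (1 :: t) Q) :
    pCount (n + 1) {P, Q} = G.card := by
  have hset : {w : List ℕ | IsRGF w ∧ w.length = n + 1 ∧ ∀ p ∈ ({P, Q} : Set (List ℕ)),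
      PatAvoids w p} = G.image (1 :: ·) := by
    ext w
    simp only [Set.mem_ofPred_eq, Set.mem_insert_iff, Set.mem_singleton_iff, forall_eq_or_imp,
      forall_eq, Finset.coe_image, Set.mem_image, Finset.mem_coe, hG]
    constructor
    · rintro ⟨hw, hlen, hP, hQ⟩
      obtain ⟨t, rfl⟩ := hw.exists_eq_one_cons (List.ne_nil_of_length_eq_add_one hlen)
      exact ⟨t, ⟨by simpa using hlen, isRGF_one_cons.1 hw, hP, hQ⟩, rfl⟩
    · rintro ⟨t, ⟨hlen, ht, hP, hQ⟩, rfl⟩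
      exact ⟨isRGF_one_cons.2 ht, by simp [hlen], hP, hQ⟩
  rw [pCount, hset, Set.ncard_coe_finset, Finset.card_image_of_injective _ List.cons_injective]

theorem wordOrdIso_four_iff {s : List ℕ} {p q r t : ℕ} :
    WordOrdIso s [p, q, r, t] ↔ ∃ a b c d, s = [a, b, c, d] ∧
      ∀ i j : Fin 4, ([a, b, c, d].getD i 0 < [a, b, c, d].getD j 0 ↔
        [p, q, r, t].getD i 0 < [p, q, r, t].getD j 0) := by
  constructor
  · rintro ⟨hlen, h⟩
    match s, hlen with
    | [a, b, c, d], _ => exact ⟨a, b, c, d, rfl, fun i j => h i j i.2 j.2⟩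
  · rintro ⟨a, b, c, d, rfl, h⟩
    exact ⟨rfl, fun i j hi hj => h ⟨i, hi⟩ ⟨j, hj⟩⟩

theorem wordOrdIso_1221_iff {s : List ℕ} :
    WordOrdIso s [1, 2, 2, 1] ↔ ∃ a b, a < b ∧ s = [a, b, b, a] := by
  rw [wordOrdIso_four_iff]
  constructor
  · rintro ⟨a, b, c, d, rfl, h⟩
    simp [Fin.forall_fin_succ] at h
    obtain ⟨rfl, rfl⟩ : b = c ∧ a = d := by omega
    exact ⟨a, b, by omega, rfl⟩
  · rintro ⟨a, b, h, rfl⟩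
    exact ⟨a, b, b, a, rfl, by simp [Fin.forall_fin_succ]; omega⟩

theorem wordOrdIso_1232_iff {s : List ℕ} :
    WordOrdIso s [1, 2, 3, 2] ↔ ∃ a b c, a < b ∧ b < c ∧ s = [a, b, c, b] := by
  rw [wordOrdIso_four_iff]
  constructor
  · rintro ⟨a, b, c, d, rfl, h⟩
    simp [Fin.forall_fin_succ] at h
    obtain rfl : b = d := by omega
    exact ⟨a, b, c, by omega, by omega, rfl⟩
  · rintro ⟨a, b, c, h, h', rfl⟩
    exact ⟨a, b, c, b, rfl, by simp [Fin.forall_fin_succ]; omega⟩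

theorem wordOrdIso_1223_iff {s : List ℕ} :
    WordOrdIso s [1, 2, 2, 3] ↔ ∃ a b c, a < b ∧ b < c ∧ s = [a, b, b, c] := by
  rw [wordOrdIso_four_iff]
  constructor
  · rintro ⟨a, b, c, d, rfl, h⟩
    simp [Fin.forall_fin_succ] at h
    obtain rfl : b = c := by omega
    exact ⟨a, b, d, by omega, by omega, rfl⟩
  · rintro ⟨a, b, c, h, h', rfl⟩
    exact ⟨a, b, b, c, rfl, by simp [Fin.forall_fin_succ]; omega⟩

theorem patAvoids_1221_iff {w : List ℕ} (hw : IsRGF w) :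
    PatAvoids w [1, 2, 2, 1] ↔ ∀ b a, [b, b, a].Sublist w → b ≤ a := by
  rw [isRGF_iff_isRGFFrom_zero] at hw
  constructor
  · intro h b a hs
    by_contra! hab
    have ha : 0 < a := hw.one_le (hs.subset (by simp))
    exact h ⟨_, hw.cons_cons_sublist hs ha hab, wordOrdIso_1221_iff.2 ⟨a, b, hab, rfl⟩⟩
  · rintro h ⟨s, hs, hiso⟩
    obtain ⟨a, b, hab, rfl⟩ := wordOrdIso_1221_iff.1 hiso
    exact absurd (h b a ((List.sublist_cons_self _ _).trans hs)) (by omega)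

theorem patAvoids_1232_iff {w : List ℕ} (hw : IsRGF w) :
    PatAvoids w [1, 2, 3, 2] ↔ ∀ c b, [c, b].Sublist w → 2 ≤ b → c ≤ b := by
  rw [isRGF_iff_isRGFFrom_zero] at hw
  constructor
  · intro h c b hs hb
    by_contra! hbc
    have hs' := hw.cons_cons_sublist (hw.cons_cons_sublist hs (by omega) hbc) one_pos (by omega)
    exact h ⟨_, hs', wordOrdIso_1232_iff.2 ⟨1, b, c, by omega, hbc, rfl⟩⟩
  · rintro h ⟨s, hs, hiso⟩
    obtain ⟨a, b, c, hab, hbc, rfl⟩ := wordOrdIso_1232_iff.1 hiso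
    have ha : 1 ≤ a := hw.one_le (hs.subset (by simp))
    have hcb : [c, b].Sublist w := (((List.Sublist.refl _).cons _).cons _).trans hs
    exact absurd (h c b hcb (by omega)) (by omega)

theorem patAvoids_1223_iff {w : List ℕ} (hw : IsRGF w) :
    PatAvoids w [1, 2, 2, 3] ↔ ∀ b c, [b, b, c].Sublist w → 2 ≤ b → c ≤ b := by
  rw [isRGF_iff_isRGFFrom_zero] at hw
  constructor
  · intro h b c hs hb
    by_contra! hbc
    have hs' := hw.cons_cons_sublist hs one_pos (by omega)
    exact h ⟨_, hs', wordOrdIso_1223_iff.2 ⟨1, b, c, by omega, hbc, rfl⟩⟩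
  · rintro h ⟨s, hs, hiso⟩
    obtain ⟨a, b, c, hab, hbc, rfl⟩ := wordOrdIso_1223_iff.1 hiso
    have ha : 1 ≤ a := hw.one_le (hs.subset (by simp))
    exact absurd (h b c ((List.sublist_cons_self _ _).trans hs) (by omega)) (by omega)

section ListFinset

variable {α : Type*} [DecidableEq α]

theorem Finset.disjoint_image_cons_left {a : α} {F G : Finset (List α)}
    (h : ∀ w ∈ G, w.head? ≠ some a) : Disjoint (F.image (a :: ·)) G := by
  rw [Finset.disjoint_left]
  rintro _ hw hwG
  obtain ⟨t, -, rfl⟩ := Finset.mem_image.1 hw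
  exact h _ hwG rfl

theorem Finset.disjoint_image_cons {a b : α} (hab : a ≠ b) (F G : Finset (List α)) :
    Disjoint (F.image (a :: ·)) (G.image (b :: ·)) :=
  Finset.disjoint_image_cons_left (by simp [Ne.symm hab])

theorem Finset.card_image_cons (a : α) (F : Finset (List α)) :
    (F.image (a :: ·)).card = F.card :=
  Finset.card_image_of_injective _ List.cons_injective

end ListFinset

/-- `w` continues an RGF prefix with largest letter `m` in which each `v ∈ [2, m]` occurs once;
the first clause covers the subsequences `v v x`, `x ≠ v`, whose first `v` lies in that prefix. -/
def Avoids1221_1223After (m : ℕ) (w : List ℕ) : Prop :=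
  (∀ v x, 2 ≤ v → v ≤ m → [v, x].Sublist w → x = v) ∧
    ∀ b x, [b, b, x].Sublist w → 2 ≤ b → x = b

namespace Avoids1221_1223After

variable {m : ℕ} {t : List ℕ}

theorem one_cons : Avoids1221_1223After m (1 :: t) ↔ Avoids1221_1223After m t := by
  simp only [Avoids1221_1223After, List.sublist_cons_iff]
  grind

theorem succ_cons :
    Avoids1221_1223After m ((m + 1) :: t) ↔ Avoids1221_1223After (m + 1) t := by
  simp only [Avoids1221_1223After, List.sublist_cons_iff]
  grind

theorem cons_of_le {v : ℕ} (hv : 2 ≤ v) (hvm : v ≤ m) :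
    Avoids1221_1223After m (v :: t) ↔ ∀ x ∈ t, x = v := by
  simp only [Avoids1221_1223After, List.sublist_cons_iff, List.cons.injEq, ↓existsAndEq,
    and_true, List.singleton_sublist]
  refine ⟨fun h x hx => h.1 v x hv hvm (.inr ⟨rfl, hx⟩), fun h => ⟨?_, ?_⟩⟩
  · rintro v' x - - (hs | ⟨rfl, hx⟩)
    · rw [h v' (hs.subset (by simp)), h x (hs.subset (by simp))]
    · exact h x hx
  · rintro b x (hs | ⟨rfl, hs⟩) -
    · rw [h b (hs.subset (by simp)), h x (hs.subset (by simp))]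
    · exact h x (hs.subset (by simp))

end Avoids1221_1223After

theorem patAvoids_1221_and_1223_iff {w : List ℕ} (hw : IsRGF w) :
    PatAvoids w [1, 2, 2, 1] ∧ PatAvoids w [1, 2, 2, 3] ↔ Avoids1221_1223After 0 w := by
  rw [patAvoids_1221_iff hw, patAvoids_1223_iff hw, Avoids1221_1223After]
  constructor
  · rintro ⟨h1221, h1223⟩
    exact ⟨fun v x hv hv0 => by omega,
      fun b x hs hb => le_antisymm (h1223 b x hs hb) (h1221 b x hs)⟩
  · rintro ⟨-, h⟩
    refine ⟨fun b a hs => ?_, fun b c hs hb => (h b c hs hb).le⟩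
    have ha : 1 ≤ a := (isRGF_iff_isRGFFrom_zero.1 hw).one_le (hs.subset (by simp))
    rcases Nat.lt_or_ge b 2 with hb | hb
    · omega
    · exact (h b a hs hb).ge

def avoiders1221_1223 : ℕ → ℕ → Finset (List ℕ)
  | _, 0 => {[]}
  | m, s + 1 => (avoiders1221_1223 m s).image (1 :: ·) ∪
      (avoiders1221_1223 (m + 1) s).image ((m + 1) :: ·) ∪
      (Finset.Icc 2 m).image (fun v => v :: List.replicate s v)

theorem cons_mem_avoiders1221_1223_succ {m s x : ℕ} {t : List ℕ} :
    x :: t ∈ avoiders1221_1223 m (s + 1) ↔ (x = 1 ∧ t ∈ avoiders1221_1223 m s) ∨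
      (x = m + 1 ∧ t ∈ avoiders1221_1223 (m + 1) s) ∨
      (2 ≤ x ∧ x ≤ m ∧ t = List.replicate s x) := by
  simp only [avoiders1221_1223, Finset.mem_union, Finset.mem_image, Finset.mem_Icc,
    List.cons.injEq]
  grind

theorem mem_avoiders1221_1223 {m s : ℕ} {w : List ℕ} (hm : 1 ≤ m) :
    w ∈ avoiders1221_1223 m s ↔
      w.length = s ∧ IsRGFFrom m w ∧ Avoids1221_1223After m w := by
  induction s generalizing m w with
  | zero => cases w <;> simp [avoiders1221_1223, IsRGFFrom, Avoids1221_1223After]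
  | succ s ih =>
    cases w with
    | nil => simp [avoiders1221_1223]
    | cons x t =>
      rw [cons_mem_avoiders1221_1223_succ]
      simp only [List.length_cons, Nat.add_right_cancel_iff, IsRGFFrom]
      obtain rfl | rfl | ⟨hx, hxm⟩ | hx :
          x = 1 ∨ x = m + 1 ∨ (2 ≤ x ∧ x ≤ m) ∨ (x = 0 ∨ m + 1 < x) := by omega
      · grind [Avoids1221_1223After.one_cons, ih hm]
      · grind [Avoids1221_1223After.succ_cons, ih (Nat.le_succ_of_le hm)]
      · grind [Avoids1221_1223After.cons_of_le hx hxm, List.eq_replicate_iff,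
          isRGFFrom_replicate]
      · grind

theorem mem_avoiders1221_1223_one {s : ℕ} {t : List ℕ} :
    t ∈ avoiders1221_1223 1 s ↔ t.length = s ∧ IsRGFFrom 1 t ∧
      PatAvoids (1 :: t) [1, 2, 2, 1] ∧ PatAvoids (1 :: t) [1, 2, 2, 3] := by
  rw [mem_avoiders1221_1223 le_rfl]
  refine and_congr_right fun _ => and_congr_right fun ht => ?_
  exact ((patAvoids_1221_and_1223_iff (isRGF_one_cons.2 ht)).trans
    Avoids1221_1223After.succ_cons).symm

theorem card_avoiders1221_1223_succ {m : ℕ} (s : ℕ) (hm : 1 ≤ m) :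
    (avoiders1221_1223 m (s + 1)).card =
      (avoiders1221_1223 m s).card + (avoiders1221_1223 (m + 1) s).card + (m - 1) := by
  have hhead : ∀ a, a = 1 ∨ a = m + 1 → ∀ w ∈ (Finset.Icc 2 m).image
      (fun v => v :: List.replicate s v), w.head? ≠ some a := by
    intro a ha w hw
    obtain ⟨v, hv, rfl⟩ := Finset.mem_image.1 hw
    simp only [Finset.mem_Icc] at hv
    simp only [List.head?_cons, ne_eq, Option.some.injEq]
    omega
  rw [avoiders1221_1223, Finset.card_union_of_disjoint (Finset.disjoint_union_left.2
      ⟨Finset.disjoint_image_cons_left (hhead 1 (.inl rfl)),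
        Finset.disjoint_image_cons_left (hhead (m + 1) (.inr rfl))⟩),
    Finset.card_union_of_disjoint (Finset.disjoint_image_cons (by omega) _ _),
    Finset.card_image_cons, Finset.card_image_cons,
    Finset.card_image_of_injective _ (fun v w h => (List.cons.inj h).1), Nat.card_Icc]
  omega

theorem two_mul_card_avoiders1221_1223 (k s : ℕ) :
    2 * (avoiders1221_1223 (k + 1) s).card + 2 * k = s * 2 ^ s + 2 + k * 2 ^ (s + 1) := by
  induction s generalizing k with
  | zero => simp [avoiders1221_1223]; ring
  | succ s ih =>
    rw [card_avoiders1221_1223_succ s (by omega)]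
    have h₁ := ih k
    have h₂ := ih (k + 1)
    simp only [pow_succ, Nat.add_sub_cancel] at *
    linarith

def stepWords : ℕ → ℕ → Finset (List ℕ)
  | _, 0 => {[]}
  | m, s + 1 => (stepWords m s).image (m :: ·) ∪ (stepWords (m + 1) s).image ((m + 1) :: ·)

theorem mem_stepWords {m s : ℕ} {w : List ℕ} (hm : 1 ≤ m) :
    w ∈ stepWords m s ↔
      w.length = s ∧ IsRGFFrom m w ∧ (∀ x ∈ w, m ≤ x) ∧ w.Pairwise (· ≤ ·) := by
  induction s generalizing m w with
  | zero => cases w <;> simp [stepWords, IsRGFFrom]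
  | succ s ih =>
    cases w with
    | nil => simp [stepWords]
    | cons x t =>
      simp only [stepWords, Finset.mem_union, Finset.mem_image, List.cons.injEq,
        List.length_cons, Nat.add_right_cancel_iff, IsRGFFrom, List.pairwise_cons,
        List.mem_cons, forall_eq_or_imp]
      obtain rfl | rfl | hx : x = m ∨ x = m + 1 ∨ (x < m ∨ m + 1 < x) := by omega
      · grind [ih hm]
      · grind [ih (Nat.le_succ_of_le hm)]
      · grind

theorem card_stepWords (m s : ℕ) : (stepWords m s).card = 2 ^ s := by
  induction s generalizing m with
  | zero => rfl
  | succ s ih =>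
    rw [stepWords, Finset.card_union_of_disjoint (Finset.disjoint_image_cons (by omega) _ _),
      Finset.card_image_cons, Finset.card_image_cons, ih, ih, pow_succ, mul_two]

/-- `w` continues an RGF prefix with largest letter `m` in which each `v ∈ [2, m]` occurs once;
the first two clauses cover the subsequences `m x` (`2 ≤ x < m`) and `m m x` (`x < m`) whose
first `m` lies in that prefix. -/
def Avoids1221_1232After (m : ℕ) (w : List ℕ) : Prop :=
  (∀ x ∈ w, 2 ≤ x → m ≤ x) ∧ (2 ≤ m → ∀ a, [m, a].Sublist w → m ≤ a) ∧
    (∀ c b, [c, b].Sublist w → 2 ≤ b → c ≤ b) ∧ ∀ b a, [b, b, a].Sublist w → 2 ≤ b → b ≤ a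

namespace Avoids1221_1232After

variable {m : ℕ} {t : List ℕ}

theorem one_cons : Avoids1221_1232After m (1 :: t) ↔ Avoids1221_1232After m t := by
  simp only [Avoids1221_1232After, List.sublist_cons_iff]
  grind

theorem succ_cons :
    Avoids1221_1232After m ((m + 1) :: t) ↔ Avoids1221_1232After (m + 1) t := by
  simp only [Avoids1221_1232After, List.sublist_cons_iff]
  grind

theorem self_cons (hm : 2 ≤ m) :
    Avoids1221_1232After m (m :: t) ↔ (∀ y ∈ t, m ≤ y) ∧ t.Pairwise (· ≤ ·) := by
  simp only [Avoids1221_1232After, List.sublist_cons_iff, List.pairwise_iff_forall_sublist]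
  grind

theorem not_cons_of_lt {x : ℕ} (hx : 2 ≤ x) (hxm : x < m) :
    ¬ Avoids1221_1232After m (x :: t) :=
  fun h => by have := h.1 x (by simp) hx; omega

end Avoids1221_1232After

theorem patAvoids_1221_and_1232_iff {w : List ℕ} (hw : IsRGF w) :
    PatAvoids w [1, 2, 2, 1] ∧ PatAvoids w [1, 2, 3, 2] ↔ Avoids1221_1232After 0 w := by
  rw [patAvoids_1221_iff hw, patAvoids_1232_iff hw, Avoids1221_1232After]
  constructor
  · rintro ⟨h1221, h1232⟩
    exact ⟨fun _ _ _ => Nat.zero_le _, by omega, h1232, fun b a hs _ => h1221 b a hs⟩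
  · rintro ⟨-, -, h1232, h⟩
    refine ⟨fun b a hs => ?_, h1232⟩
    have ha : 1 ≤ a := (isRGF_iff_isRGFFrom_zero.1 hw).one_le (hs.subset (by simp))
    rcases Nat.lt_or_ge b 2 with hb | hb
    · omega
    · exact h b a hs hb

def avoiders1221_1232 : ℕ → ℕ → Finset (List ℕ)
  | _, 0 => {[]}
  | m, s + 1 => (avoiders1221_1232 m s).image (1 :: ·) ∪
      (avoiders1221_1232 (m + 1) s).image ((m + 1) :: ·) ∪
      (if 2 ≤ m then stepWords m s else ∅).image (m :: ·)

theorem cons_mem_avoiders1221_1232_succ {m s x : ℕ} {t : List ℕ} :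
    x :: t ∈ avoiders1221_1232 m (s + 1) ↔ (x = 1 ∧ t ∈ avoiders1221_1232 m s) ∨
      (x = m + 1 ∧ t ∈ avoiders1221_1232 (m + 1) s) ∨
      (2 ≤ m ∧ x = m ∧ t ∈ stepWords m s) := by
  simp only [avoiders1221_1232, Finset.mem_union, Finset.mem_image, List.cons.injEq]
  grind

theorem mem_avoiders1221_1232 {m s : ℕ} {w : List ℕ} (hm : 1 ≤ m) :
    w ∈ avoiders1221_1232 m s ↔
      w.length = s ∧ IsRGFFrom m w ∧ Avoids1221_1232After m w := by
  induction s generalizing m w with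
  | zero => cases w <;> simp [avoiders1221_1232, IsRGFFrom, Avoids1221_1232After]
  | succ s ih =>
    cases w with
    | nil => simp [avoiders1221_1232]
    | cons x t =>
      rw [cons_mem_avoiders1221_1232_succ]
      simp only [List.length_cons, Nat.add_right_cancel_iff, IsRGFFrom]
      obtain rfl | rfl | ⟨rfl, hm₂⟩ | ⟨hx, hxm⟩ | hx : x = 1 ∨ x = m + 1 ∨ (x = m ∧ 2 ≤ m) ∨
          (2 ≤ x ∧ x < m) ∨ (x = 0 ∨ m + 1 < x) := by omega
      · grind [Avoids1221_1232After.one_cons, ih hm]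
      · grind [Avoids1221_1232After.succ_cons, ih (Nat.le_succ_of_le hm)]
      · grind [Avoids1221_1232After.self_cons hm₂, mem_stepWords hm]
      · grind [Avoids1221_1232After.not_cons_of_lt hx hxm]
      · grind

theorem mem_avoiders1221_1232_one {s : ℕ} {t : List ℕ} :
    t ∈ avoiders1221_1232 1 s ↔ t.length = s ∧ IsRGFFrom 1 t ∧
      PatAvoids (1 :: t) [1, 2, 2, 1] ∧ PatAvoids (1 :: t) [1, 2, 3, 2] := by
  rw [mem_avoiders1221_1232 le_rfl]
  refine and_congr_right fun _ => and_congr_right fun ht => ?_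
  exact ((patAvoids_1221_and_1232_iff (isRGF_one_cons.2 ht)).trans
    Avoids1221_1232After.succ_cons).symm

theorem card_avoiders1221_1232_succ {m : ℕ} (s : ℕ) (hm : 1 ≤ m) :
    (avoiders1221_1232 m (s + 1)).card = (avoiders1221_1232 m s).card +
      (avoiders1221_1232 (m + 1) s).card + if 2 ≤ m then 2 ^ s else 0 := by
  rw [avoiders1221_1232]
  split_ifs with hm₂
  · rw [Finset.card_union_of_disjoint (Finset.disjoint_union_left.2
        ⟨Finset.disjoint_image_cons (by omega) _ _, Finset.disjoint_image_cons (by omega) _ _⟩),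
      Finset.card_union_of_disjoint (Finset.disjoint_image_cons (by omega) _ _),
      Finset.card_image_cons, Finset.card_image_cons, Finset.card_image_cons, card_stepWords]
  · rw [Finset.image_empty, Finset.union_empty,
      Finset.card_union_of_disjoint (Finset.disjoint_image_cons (by omega) _ _),
      Finset.card_image_cons, Finset.card_image_cons, add_zero]

theorem two_mul_card_avoiders1221_1232_of_two_le {m : ℕ} (s : ℕ) (hm : 2 ≤ m) :
    2 * (avoiders1221_1232 m s).card = (s + 2) * 2 ^ s := by
  induction s generalizing m with
  | zero => simp [avoiders1221_1232]
  | succ s ih =>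
    rw [card_avoiders1221_1232_succ s (by omega), if_pos hm]
    have h₁ := ih hm
    have h₂ := ih (Nat.le_succ_of_le hm)
    rw [pow_succ]
    linarith

theorem two_mul_card_avoiders1221_1232_one (s : ℕ) :
    2 * (avoiders1221_1232 1 s).card = s * 2 ^ s + 2 := by
  induction s with
  | zero => simp [avoiders1221_1232]
  | succ s ih =>
    rw [card_avoiders1221_1232_succ s le_rfl, if_neg (by omega), add_zero]
    have h := two_mul_card_avoiders1221_1232_of_two_le s le_rfl
    rw [pow_succ]
    linarith

/-- Proposition 4.16: `p_n(1221,1232) = p_n(1221,1223) = 1 + (n-1)·2^{n-2}`. -/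
theorem stmt18 :
    ∀ n : ℕ, 2 ≤ n →
      pCount n {[1,2,2,1], [1,2,3,2]} = 1 + (n - 1) * 2 ^ (n - 2) ∧
      pCount n {[1,2,2,1], [1,2,2,3]} = 1 + (n - 1) * 2 ^ (n - 2) := by
  intro n hn
  obtain ⟨s, rfl⟩ : ∃ s, n = s + 2 := ⟨n - 2, by omega⟩
  rw [Nat.add_sub_cancel, show s + 2 - 1 = s + 1 by omega]
  constructor
  · rw [pCount_succ_eq_card fun t => mem_avoiders1221_1232_one]
    have h := two_mul_card_avoiders1221_1232_one (s + 1)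
    rw [pow_succ] at h
    linarith
  · rw [pCount_succ_eq_card fun t => mem_avoiders1221_1223_one]
    have h := two_mul_card_avoiders1221_1223 0 (s + 1)
    rw [pow_succ] at h
    linarith
end
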